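/- arXiv:1603.04416 — 4 statements merged into one kernel-verified Lean document; each statement's English description precedes it below -/
import Mathlib

section
/- An idealised conformity measure A is S-optimal if and only if it is N-optimal, if and only if it is OF-optimal, if and only if it is OE-optimal, if and only if it is a refinement of the CP idealised conformity measure; that is, O(S) = O(OF) = O(N) = O(OE) = R(CP). -/
noncomputable section Conformal

open Finset

variable {X Y : Type*} [Fintype X] [Fintype Y] [DecidableEq Y]

/-- The p-value `p_A(x,y,τ) = Q{z : A z < A (x,y)} + τ·Q{z : A z = A (x,y)}`. -/
def pValue (Q A : X × Y → ℝ) (x : X) (y : Y) (τ : ℝ) : ℝ :=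
  (∑ z : X × Y, if A z < A (x, y) then Q z else 0)
    + τ * ∑ z : X × Y, if A z = A (x, y) then Q z else 0

/-- The prediction set `Γ_A^ε(x,τ) = {y : p_A(x,y,τ) > ε}`. -/
def predSet (Q A : X × Y → ℝ) (ε : ℝ) (x : X) (τ : ℝ) : Finset Y :=
  Finset.univ.filter fun y => ε < pValue Q A x y τ

/-- The marginal `Q_X` of `Q` on the object space. -/
def margX (Q : X × Y → ℝ) (x : X) : ℝ := ∑ y, Q (x, y)

/-- The marginal `Q_Y` of `Q` on the label space. -/
def margY (Q : X × Y → ℝ) (y : Y) : ℝ := ∑ x, Q (x, y)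

/-- The conditional probability `Q(y|x)`; as a function of `z = (x,y)` this is the
CP idealised conformity measure. -/
def condQ (Q : X × Y → ℝ) (z : X × Y) : ℝ := Q z / margX Q z.1

/-- Expectation `E_{x,τ}` with `x ~ Q_X` and `τ` uniform on `[0,1]`, independent. -/
def expXT (Q : X × Y → ℝ) (g : X → ℝ → ℝ) : ℝ :=
  ∑ x, margX Q x * ∫ τ in (0:ℝ)..1, g x τ

/-- Expectation `E_{(x,y),τ}` with `(x,y) ~ Q` and `τ` uniform on `[0,1]`, independent. -/
def expZT (Q : X × Y → ℝ) (g : X × Y → ℝ → ℝ) : ℝ :=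
  ∑ z, Q z * ∫ τ in (0:ℝ)..1, g z τ

open Classical in
/-- Probability `Prob_{x,τ}` with `x ~ Q_X` and `τ` uniform on `[0,1]`, independent. -/
def probXT (Q : X × Y → ℝ) (P : X → ℝ → Prop) : ℝ :=
  expXT Q fun x τ => if P x τ then 1 else 0

open Classical in
/-- Probability `Prob_{(x,y),τ}` with `(x,y) ~ Q` and `τ` uniform on `[0,1]`, independent. -/
def probZT (Q : X × Y → ℝ) (P : X × Y → ℝ → Prop) : ℝ :=
  expZT Q fun z τ => if P z τ then 1 else 0

/-- `A` is a refinement of `B`. -/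
def Refines (A B : X × Y → ℝ) : Prop :=
  ∀ z1 z2 : X × Y, B z1 < B z2 → A z1 < A z2

/-- `max_{y' ≠ y} p_A(x,y',τ)`. -/
def maxOther (Q A : X × Y → ℝ) (x : X) (y : Y) (τ : ℝ) : ℝ :=
  ⨆ y' : {y' : Y // y' ≠ y}, pValue Q A x y'.1 τ

/-- The unconfidence `min_y max_{y' ≠ y} p_A(x,y',τ)`. -/
def unconf (Q A : X × Y → ℝ) (x : X) (τ : ℝ) : ℝ := ⨅ y : Y, maxOther Q A x y τ

/-- The credibility `max_y p_A(x,y,τ)`. -/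
def maxPV (Q A : X × Y → ℝ) (x : X) (τ : ℝ) : ℝ := ⨆ y : Y, pValue Q A x y τ

/-- The predictability `f(x) = max_y Q(y|x)`. -/
def predictability (Q : X × Y → ℝ) (x : X) : ℝ := ⨆ y : Y, condQ Q (x, y)

/-- `c` is a choice function: `Q(c x | x) = f(x)` for all `x`. -/
def IsChoiceFun (Q : X × Y → ℝ) (c : X → Y) : Prop :=
  ∀ x, condQ Q (x, c x) = predictability Q x

/-- The signed predictability (SP) idealised conformity measure corresponding to `c`. -/
def SPMeasure (Q : X × Y → ℝ) (c : X → Y) : X × Y → ℝ := fun z =>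
  if z.2 = c z.1 then predictability Q z.1 else -predictability Q z.1

/-- The modified conditional probability (MCP) idealised conformity measure
corresponding to `c`. -/
def MCPMeasure (Q : X × Y → ℝ) (c : X → Y) : X × Y → ℝ := fun z =>
  if z.2 = c z.1 then condQ Q z else condQ Q z - 1

/-- The modified signed predictability (MSP) idealised conformity measure
(independent of the choice function: `y = ŷ(x)` iff `Q(y|x) = f(x)` when `f(x) > 1/2`). -/
def MSPMeasure (Q : X × Y → ℝ) : X × Y → ℝ := fun z =>
  if 1 / 2 < predictability Q z.1 then
    if condQ Q z = predictability Q z.1 then predictability Q z.1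
    else -predictability Q z.1
  else 0

/-- S-optimality. -/
def SOpt (Q A : X × Y → ℝ) : Prop :=
  ∀ B : X × Y → ℝ,
    expXT Q (fun x τ => ∑ y, pValue Q A x y τ)
      ≤ expXT Q (fun x τ => ∑ y, pValue Q B x y τ)

/-- N-optimality. -/
def NOpt (Q A : X × Y → ℝ) : Prop :=
  ∀ B : X × Y → ℝ, ∀ ε ∈ Set.Ioo (0:ℝ) 1,
    expXT Q (fun x τ => ((predSet Q A ε x τ).card : ℝ))
      ≤ expXT Q (fun x τ => ((predSet Q B ε x τ).card : ℝ))

/-- OF-optimality. -/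
def OFOpt (Q A : X × Y → ℝ) : Prop :=
  ∀ B : X × Y → ℝ,
    expZT Q (fun z τ => ∑ y' ∈ Finset.univ.erase z.2, pValue Q A z.1 y' τ)
      ≤ expZT Q (fun z τ => ∑ y' ∈ Finset.univ.erase z.2, pValue Q B z.1 y' τ)

/-- OE-optimality. -/
def OEOpt (Q A : X × Y → ℝ) : Prop :=
  ∀ B : X × Y → ℝ, ∀ ε ∈ Set.Ioo (0:ℝ) 1,
    expZT Q (fun z τ => (((predSet Q A ε z.1 τ).erase z.2).card : ℝ))
      ≤ expZT Q (fun z τ => (((predSet Q B ε z.1 τ).erase z.2).card : ℝ))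

/-- U-optimality. -/
def UOpt (Q A : X × Y → ℝ) : Prop :=
  ∀ B : X × Y → ℝ,
    expXT Q (unconf Q A) < expXT Q (unconf Q B) ∨
      (expXT Q (unconf Q A) = expXT Q (unconf Q B) ∧
        expXT Q (maxPV Q A) ≤ expXT Q (maxPV Q B))

/-- M-optimality. -/
def MOpt (Q A : X × Y → ℝ) : Prop :=
  ∀ B : X × Y → ℝ, ∀ ε ∈ Set.Ioo (0:ℝ) 1,
    probXT Q (fun x τ => 1 < (predSet Q A ε x τ).card)
        < probXT Q (fun x τ => 1 < (predSet Q B ε x τ).card) ∨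
      (probXT Q (fun x τ => 1 < (predSet Q A ε x τ).card)
          = probXT Q (fun x τ => 1 < (predSet Q B ε x τ).card) ∧
        probXT Q (fun x τ => (predSet Q B ε x τ).card = 0)
          ≤ probXT Q (fun x τ => (predSet Q A ε x τ).card = 0))

/-- F-optimality. -/
def FOpt (Q A : X × Y → ℝ) : Prop :=
  ∀ B : X × Y → ℝ,
    expXT Q (fun x τ => (∑ y, pValue Q A x y τ) - maxPV Q A x τ)
        < expXT Q (fun x τ => (∑ y, pValue Q B x y τ) - maxPV Q B x τ) ∨
      (expXT Q (fun x τ => (∑ y, pValue Q A x y τ) - maxPV Q A x τ)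
          = expXT Q (fun x τ => (∑ y, pValue Q B x y τ) - maxPV Q B x τ) ∧
        expXT Q (maxPV Q A) ≤ expXT Q (maxPV Q B))

/-- E-optimality. -/
def EOpt (Q A : X × Y → ℝ) : Prop :=
  ∀ B : X × Y → ℝ, ∀ ε ∈ Set.Ioo (0:ℝ) 1,
    expXT Q (fun x τ => max (((predSet Q A ε x τ).card : ℝ) - 1) 0)
        < expXT Q (fun x τ => max (((predSet Q B ε x τ).card : ℝ) - 1) 0) ∨
      (expXT Q (fun x τ => max (((predSet Q A ε x τ).card : ℝ) - 1) 0)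
          = expXT Q (fun x τ => max (((predSet Q B ε x τ).card : ℝ) - 1) 0) ∧
        probXT Q (fun x τ => (predSet Q B ε x τ).card = 0)
          ≤ probXT Q (fun x τ => (predSet Q A ε x τ).card = 0))

/-- OU-optimality. -/
def OUOpt (Q A : X × Y → ℝ) : Prop :=
  ∀ B : X × Y → ℝ,
    expZT Q (fun z τ => maxOther Q A z.1 z.2 τ)
      ≤ expZT Q (fun z τ => maxOther Q B z.1 z.2 τ)

/-- OM-optimality. -/
def OMOpt (Q A : X × Y → ℝ) : Prop :=
  ∀ B : X × Y → ℝ, ∀ ε ∈ Set.Ioo (0:ℝ) 1,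
    probZT Q (fun z τ => ((predSet Q A ε z.1 τ).erase z.2).Nonempty)
      ≤ probZT Q (fun z τ => ((predSet Q B ε z.1 τ).erase z.2).Nonempty)

end Conformal

open Finset MeasureTheory

/-!
Averaging over `τ`, every criterion becomes a functional of the p-value profile of `A`:
a point `w` has mean p-value `Q{A < A w} + Q{A = A w} / 2`, and its p-value exceeds `ε` with a
probability `g_A(w, ε)`. The S-criterion `∑_w Q_X(w) (Q{A < A w} + Q{A = A w} / 2)`, symmetrised
over pairs `{z, w}`, is at least `½ ∑ min (Q z Q_X w, Q w Q_X z)`, with equality exactly when `A`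
orders every pair as the likelihood ratio `Q(y|x) = Q / Q_X` does. Under `Q` itself the p-value
exceeds `ε` with probability exactly `1 - ε` for every `A`, so by the Neyman–Pearson lemma the
N-criterion `∑_w Q_X(w) g_A(w, ε)` is minimised at each `ε` by refinements of CP; integrated over
`ε ∈ (0, 1)` it is the S-criterion, so N-optimality implies S-optimality. The observed criteria
are the unobserved ones shifted by constants: `OF = S - 1/2` and `OE(ε) = N(ε) - (1 - ε)`.
-/

section TailProb

-- `∫ τ in 0..1, 1[ε < L + τ M]` in closed form
noncomputable def tailProb (L M ε : ℝ) : ℝ :=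
  if M = 0 then (if ε < L then 1 else 0) else min 1 (max 0 ((L + M - ε) / M))

variable {L M ε : ℝ}

lemma tailProb_nonneg : 0 ≤ tailProb L M ε := by
  unfold tailProb; split_ifs <;> simp

lemma tailProb_le_one : tailProb L M ε ≤ 1 := by
  unfold tailProb; split_ifs <;> simp

lemma tailProb_eq_one (hM : 0 ≤ M) (h : ε < L) : tailProb L M ε = 1 := by
  unfold tailProb
  split_ifs with h0
  · rfl
  · have hM' : 0 < M := lt_of_le_of_ne hM (Ne.symm h0)
    exact min_eq_left (le_max_of_le_right ((one_le_div₀ hM').2 (by linarith)))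

lemma tailProb_eq_zero (hM : 0 ≤ M) (h : L + M ≤ ε) : tailProb L M ε = 0 := by
  unfold tailProb
  split_ifs with h0 h1
  · linarith
  · rfl
  · rw [max_eq_left (div_nonpos_of_nonpos_of_nonneg (by linarith) hM)]
    exact min_eq_right zero_le_one

lemma mul_tailProb (hM : 0 ≤ M) :
    M * tailProb L M ε = max (L + M - ε) 0 - max (L - ε) 0 := by
  rcases hM.eq_or_lt with rfl | hM
  · simp
  rw [tailProb, if_neg hM.ne', mul_min_of_nonneg _ _ hM.le, mul_max_of_nonneg _ _ hM.le,
    mul_div_cancel₀ _ hM.ne']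
  simp only [max_def, min_def]
  split_ifs <;> linarith

lemma tailProb_antitone (hM : 0 ≤ M) : Antitone (tailProb L M) := by
  intro a b hab
  unfold tailProb
  split_ifs with h0 h1 h2
  · exact le_rfl
  · exact absurd (hab.trans_lt h1) h2
  · exact zero_le_one
  · exact le_rfl
  · have hM' : 0 < M := lt_of_le_of_ne hM (Ne.symm h0)
    gcongr

lemma integral_ite_const_lt (c : ℝ) :
    ∫ τ in (0:ℝ)..1, (if c < τ then (1:ℝ) else 0) = min 1 (max 0 (1 - c)) := by
  have h1 : (fun τ : ℝ => if c < τ then (1:ℝ) else 0) = (Set.Ioi c).indicator fun _ => 1 := by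
    ext τ; simp [Set.indicator]
  rw [intervalIntegral.integral_of_le zero_le_one, h1, setIntegral_indicator measurableSet_Ioi,
    Set.Ioc_inter_Ioi, setIntegral_const, measureReal_def, Real.volume_Ioc, smul_eq_mul,
    mul_one]
  rcases le_total c 0 with h | h
  · rw [max_eq_left h, ENNReal.toReal_ofReal (by norm_num), max_eq_right (by linarith),
      min_eq_left (by linarith), sub_zero]
  rcases le_total c 1 with h' | h'
  · rw [max_eq_right h, ENNReal.toReal_ofReal (by linarith), max_eq_right (by linarith),
      min_eq_right (by linarith)]
  · rw [max_eq_right h, ENNReal.ofReal_eq_zero.2 (by linarith), ENNReal.toReal_zero,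
      max_eq_left (by linarith), min_eq_right zero_le_one]

lemma integral_ite_lt_const {c : ℝ} (h0 : 0 ≤ c) (h1 : c ≤ 1) :
    ∫ ε in (0:ℝ)..1, (if ε < c then (1:ℝ) else 0) = c := by
  have h : (fun ε : ℝ => if ε < c then (1:ℝ) else 0) = (Set.Iio c).indicator fun _ => 1 := by
    ext ε; simp [Set.indicator]
  have hset : Set.Ioc (0:ℝ) 1 ∩ Set.Iio c = Set.Ioo 0 c := by
    ext ε; simp only [Set.mem_inter_iff, Set.mem_Ioc, Set.mem_Iio, Set.mem_Ioo]
    constructor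
    · rintro ⟨⟨h0, -⟩, h⟩; exact ⟨h0, h⟩
    · rintro ⟨h0, h⟩; exact ⟨⟨h0, by linarith⟩, h⟩
  rw [intervalIntegral.integral_of_le zero_le_one, h, setIntegral_indicator measurableSet_Iio,
    hset, setIntegral_const, measureReal_def, Real.volume_Ioo, smul_eq_mul, mul_one,
    ENNReal.toReal_ofReal (by linarith), sub_zero]

lemma integral_ite_lt_add_mul (hM : 0 ≤ M) :
    ∫ τ in (0:ℝ)..1, (if ε < L + τ * M then (1:ℝ) else 0) = tailProb L M ε := by
  rcases hM.eq_or_lt with rfl | hM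
  · simp [tailProb]
  have h : (fun τ : ℝ => if ε < L + τ * M then (1:ℝ) else 0)
      = fun τ => if (ε - L) / M < τ then (1:ℝ) else 0 := by
    ext τ
    congr 1
    rw [div_lt_iff₀ hM]
    exact propext ⟨fun h => by linarith, fun h => by linarith⟩
  rw [h, integral_ite_const_lt, tailProb, if_neg hM.ne']
  congr 2
  field_simp
  ring

lemma integral_max_sub {c : ℝ} (h0 : 0 ≤ c) (h1 : c ≤ 1) :
    ∫ ε in (0:ℝ)..1, max (c - ε) 0 = c ^ 2 / 2 := by
  have hcont : Continuous fun ε : ℝ => max (c - ε) 0 := by fun_prop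
  rw [← intervalIntegral.integral_add_adjacent_intervals (b := c)
    (hcont.intervalIntegrable _ _) (hcont.intervalIntegrable _ _)]
  have hleft : ∫ ε in (0:ℝ)..c, max (c - ε) 0 = ∫ ε in (0:ℝ)..c, (c - ε) :=
    intervalIntegral.integral_congr fun ε hε => by
      rw [Set.uIcc_of_le h0] at hε; exact max_eq_left (by linarith [hε.2])
  have hright : ∫ ε in c..1, max (c - ε) 0 = ∫ _ in c..1, (0:ℝ) :=
    intervalIntegral.integral_congr fun ε hε => by
      rw [Set.uIcc_of_le h1] at hε; exact max_eq_right (by linarith [hε.1])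
  rw [hleft, hright, intervalIntegral.integral_comp_sub_left (fun ε => ε), integral_id]
  simp

lemma integral_tailProb (hL : 0 ≤ L) (hM : 0 ≤ M) (hLM : L + M ≤ 1) :
    ∫ ε in (0:ℝ)..1, tailProb L M ε = L + M / 2 := by
  rcases hM.eq_or_lt with rfl | hM
  · simpa [tailProb] using integral_ite_lt_const hL (by linarith)
  have h : tailProb L M = fun ε => (max (L + M - ε) 0 - max (L - ε) 0) / M := by
    ext ε; rw [← mul_tailProb hM.le, mul_div_cancel_left₀ _ hM.ne']
  have hcont : ∀ c : ℝ, Continuous fun ε : ℝ => max (c - ε) 0 := fun c => by fun_prop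
  rw [h, intervalIntegral.integral_div, intervalIntegral.integral_sub
    (hcont _ |>.intervalIntegrable _ _) (hcont _ |>.intervalIntegrable _ _),
    integral_max_sub (by linarith) hLM, integral_max_sub hL (by linarith)]
  field_simp
  ring

end TailProb

lemma Finset.sum_sub_filter_le_filter_lt {α : Type*} [LinearOrder α] (φ : ℝ → ℝ) (m : α → ℝ)
    (V : Finset α) :
    ∑ a ∈ V, (φ (∑ b ∈ V.filter (· ≤ a), m b) - φ (∑ b ∈ V.filter (· < a), m b))
      = φ (∑ b ∈ V, m b) - φ 0 := by
  induction V using Finset.induction_on_max with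
  | empty => simp
  | insert a s ha ih =>
    have has : a ∉ s := fun h => lt_irrefl a (ha a h)
    have hle : (insert a s).filter (· ≤ a) = insert a s :=
      Finset.filter_true_of_mem fun b hb => by
        rcases Finset.mem_insert.1 hb with rfl | hb
        exacts [le_rfl, (ha b hb).le]
    have hlt : (insert a s).filter (· < a) = s := by
      rw [Finset.filter_insert, if_neg (lt_irrefl a)]
      exact Finset.filter_true_of_mem ha
    have hrest : ∑ b ∈ s, (φ (∑ c ∈ (insert a s).filter (· ≤ b), m c)
        - φ (∑ c ∈ (insert a s).filter (· < b), m c))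
        = ∑ b ∈ s, (φ (∑ c ∈ s.filter (· ≤ b), m c) - φ (∑ c ∈ s.filter (· < b), m c)) :=
      Finset.sum_congr rfl fun b hb => by
        rw [Finset.filter_insert, Finset.filter_insert, if_neg (ha b hb).not_ge,
          if_neg (ha b hb).le.not_gt]
    rw [Finset.sum_insert has, hrest, ih, hle, hlt, Finset.sum_insert has]
    ring

section Masses

variable {ι : Type*} [Fintype ι] (Q C : ι → ℝ)

noncomputable def massBelow (a : ℝ) : ℝ := ∑ z, if C z < a then Q z else 0

noncomputable def massAt (a : ℝ) : ℝ := ∑ z, if C z = a then Q z else 0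

noncomputable def pValueMean (a : ℝ) : ℝ := massBelow Q C a + massAt Q C a / 2

noncomputable def pValueTail (a ε : ℝ) : ℝ := tailProb (massBelow Q C a) (massAt Q C a) ε

variable {Q C}

lemma massBelow_nonneg (hQ0 : ∀ z, 0 ≤ Q z) (a : ℝ) : 0 ≤ massBelow Q C a :=
  Finset.sum_nonneg fun z _ => by split_ifs; exacts [hQ0 z, le_rfl]

lemma massAt_nonneg (hQ0 : ∀ z, 0 ≤ Q z) (a : ℝ) : 0 ≤ massAt Q C a :=
  Finset.sum_nonneg fun z _ => by split_ifs; exacts [hQ0 z, le_rfl]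

lemma massBelow_add_massAt (a : ℝ) :
    massBelow Q C a + massAt Q C a = ∑ z, if C z ≤ a then Q z else 0 := by
  rw [massBelow, massAt, ← Finset.sum_add_distrib]
  refine Finset.sum_congr rfl fun z _ => ?_
  rcases lt_trichotomy (C z) a with h | h | h
  · simp [h, h.ne, h.le]
  · simp [h]
  · simp [h.not_gt, h.ne', h.not_ge]

lemma massBelow_add_massAt_le_one (hQ0 : ∀ z, 0 ≤ Q z) (hQ1 : ∑ z, Q z = 1) (a : ℝ) :
    massBelow Q C a + massAt Q C a ≤ 1 := by
  rw [massBelow_add_massAt, ← hQ1]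
  exact Finset.sum_le_sum fun z _ => by split_ifs; exacts [le_rfl, hQ0 z]

lemma massBelow_add_massAt_le_massBelow (hQ0 : ∀ z, 0 ≤ Q z) {a b : ℝ} (hab : a < b) :
    massBelow Q C a + massAt Q C a ≤ massBelow Q C b := by
  rw [massBelow_add_massAt, massBelow]
  refine Finset.sum_le_sum fun z _ => ?_
  split_ifs with h1 h2
  · exact le_rfl
  · exact absurd (h1.trans_lt hab) h2
  · exact hQ0 z
  · exact le_rfl

lemma sum_mul_comp_eq_sum_image_massAt (F : ℝ → ℝ) :
    ∑ z, Q z * F (C z) = ∑ a ∈ univ.image C, massAt Q C a * F a := by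
  rw [← Finset.sum_fiberwise_of_maps_to fun z _ => Finset.mem_image_of_mem C (mem_univ z)]
  refine Finset.sum_congr rfl fun a _ => ?_
  rw [massAt, Finset.sum_mul, Finset.sum_filter]
  refine Finset.sum_congr rfl fun z _ => ?_
  split_ifs with h
  · rw [h]
  · rw [zero_mul]

lemma sum_image_filter_massAt (p : ℝ → Prop) [DecidablePred p] :
    ∑ b ∈ (univ.image C).filter p, massAt Q C b = ∑ z, if p (C z) then Q z else 0 := by
  simpa [Finset.sum_filter, ← Finset.sum_ite_irrel] using
    (sum_mul_comp_eq_sum_image_massAt (Q := Q) (C := C) fun a => if p a then 1 else 0).symm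

-- Grouping the points by their conformity value `a` turns the sum into a telescoping one.
lemma sum_mul_comp_eq_sub_of_telescope (φ F : ℝ → ℝ)
    (hF : ∀ a, massAt Q C a * F a
      = φ (massBelow Q C a + massAt Q C a) - φ (massBelow Q C a)) :
    ∑ z, Q z * F (C z) = φ (∑ z, Q z) - φ 0 := by
  have hle : ∀ a, massBelow Q C a + massAt Q C a
      = ∑ b ∈ (univ.image C).filter (· ≤ a), massAt Q C b := fun a => by
    rw [massBelow_add_massAt, sum_image_filter_massAt]
  have hlt : ∀ a, massBelow Q C a = ∑ b ∈ (univ.image C).filter (· < a), massAt Q C b :=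
    fun a => by rw [sum_image_filter_massAt, massBelow]
  have htot : ∑ z, Q z = ∑ b ∈ univ.image C, massAt Q C b := by
    simpa using sum_mul_comp_eq_sum_image_massAt (Q := Q) (C := C) fun _ => 1
  rw [sum_mul_comp_eq_sum_image_massAt, htot,
    ← Finset.sum_sub_filter_le_filter_lt φ (massAt Q C)]
  exact Finset.sum_congr rfl fun a _ => by rw [hF, hle, hlt]

lemma sum_mul_pValueMean : ∑ z, Q z * pValueMean Q C (C z) = (∑ z, Q z) ^ 2 / 2 := by
  rw [sum_mul_comp_eq_sub_of_telescope (fun t => t ^ 2 / 2) (pValueMean Q C) fun a => by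
    rw [pValueMean]; ring]
  ring

lemma sum_mul_pValueTail (hQ0 : ∀ z, 0 ≤ Q z) (hQ1 : ∑ z, Q z = 1) {ε : ℝ} (hε0 : 0 ≤ ε)
    (hε1 : ε ≤ 1) : ∑ z, Q z * pValueTail Q C (C z) ε = 1 - ε := by
  rw [sum_mul_comp_eq_sub_of_telescope (fun t => max (t - ε) 0) (pValueTail Q C · ε)
    fun a => mul_tailProb (massAt_nonneg hQ0 a), hQ1, max_eq_left (by linarith),
    max_eq_right (by linarith), sub_zero]

lemma pValueTail_nonneg (a ε : ℝ) : 0 ≤ pValueTail Q C a ε := tailProb_nonneg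

lemma pValueTail_le_one (a ε : ℝ) : pValueTail Q C a ε ≤ 1 := tailProb_le_one

lemma pValueTail_antitone (hQ0 : ∀ z, 0 ≤ Q z) (a : ℝ) : Antitone (pValueTail Q C a) :=
  tailProb_antitone (massAt_nonneg hQ0 a)

lemma pValueTail_eq_one_of_lt (hQ0 : ∀ z, 0 ≤ Q z) {a b ε : ℝ} (hab : a < b)
    (ha : 0 < pValueTail Q C a ε) : pValueTail Q C b ε = 1 := by
  refine tailProb_eq_one (massAt_nonneg hQ0 b) ?_
  by_contra! h
  exact ha.ne' (tailProb_eq_zero (massAt_nonneg hQ0 a)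
    ((massBelow_add_massAt_le_massBelow hQ0 hab).trans h))

lemma integral_pValueTail (hQ0 : ∀ z, 0 ≤ Q z) (hQ1 : ∑ z, Q z = 1) (a : ℝ) :
    ∫ ε in (0:ℝ)..1, pValueTail Q C a ε = pValueMean Q C a :=
  integral_tailProb (massBelow_nonneg hQ0 a) (massAt_nonneg hQ0 a)
    (massBelow_add_massAt_le_one hQ0 hQ1 a)

end Masses

lemma min_le_sign_combination (a b t : ℝ) :
    min a b ≤ (a * (1 + Real.sign t) + b * (1 - Real.sign t)) / 2 := by
  rcases lt_trichotomy t 0 with ht | rfl | ht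
  · rw [Real.sign_of_neg ht]; linarith [min_le_right a b]
  · rw [Real.sign_zero]; linarith [min_le_left a b, min_le_right a b]
  · rw [Real.sign_of_pos ht]; linarith [min_le_left a b]

lemma sign_combination_eq_min_iff (a b t : ℝ) :
    (a * (1 + Real.sign t) + b * (1 - Real.sign t)) / 2 = min a b ↔
      (a < b → 0 < t) ∧ (b < a → t < 0) := by
  rcases lt_trichotomy t 0 with ht | rfl | ht
  · simp only [Real.sign_of_neg ht, ht, ht.not_gt]
    constructor
    · intro h; exact ⟨fun hab => by rw [min_eq_left hab.le] at h; linarith, fun _ => trivial⟩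
    · intro h; rw [min_eq_right (not_lt.1 fun hab => (h.1 hab).elim)]; ring
  · simp only [Real.sign_zero, lt_irrefl]
    constructor
    · intro h
      refine ⟨fun hab => ?_, fun hab => ?_⟩
      · rw [min_eq_left hab.le] at h; linarith
      · rw [min_eq_right hab.le] at h; linarith
    · rintro ⟨h1, h2⟩
      rw [le_antisymm (not_lt.1 h2) (not_lt.1 h1), min_self]; ring
  · simp only [Real.sign_of_pos ht, ht, ht.not_gt]
    constructor
    · intro h; exact ⟨fun _ => trivial, fun hab => by rw [min_eq_right hab.le] at h; linarith⟩
    · intro h; rw [min_eq_left (not_lt.1 fun hab => (h.2 hab).elim)]; ring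

section Criteria

variable {ι : Type*} [Fintype ι] {P Q C : ι → ℝ}

noncomputable def weightedMean (P Q C : ι → ℝ) : ℝ := ∑ w, P w * pValueMean Q C (C w)

noncomputable def weightedTail (P Q C : ι → ℝ) (ε : ℝ) : ℝ :=
  ∑ w, P w * pValueTail Q C (C w) ε

lemma sum_mul_le_sum_mul_of_neyman_pearson {f g : ι → ℝ} {t : ℝ} (ht : 0 < t)
    (hf0 : ∀ w, 0 ≤ f w) (hf1 : ∀ w, f w ≤ 1)
    (hg0 : ∀ w, Q w < t * P w → g w = 0) (hg1 : ∀ w, t * P w < Q w → g w = 1)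
    (hsize : ∑ w, Q w * g w ≤ ∑ w, Q w * f w) :
    ∑ w, P w * g w ≤ ∑ w, P w * f w := by
  have hpoint : ∀ w, (f w - g w) * (Q w - t * P w) ≤ 0 := fun w => by
    rcases lt_trichotomy (Q w) (t * P w) with h | h | h
    · rw [hg0 w h, sub_zero]; exact mul_nonpos_of_nonneg_of_nonpos (hf0 w) (by linarith)
    · rw [h, sub_self, mul_zero]
    · rw [hg1 w h]; exact mul_nonpos_of_nonpos_of_nonneg (by linarith [hf1 w]) (by linarith)
  have hsum : ∑ w, (f w - g w) * (Q w - t * P w)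
      = (∑ w, Q w * f w - ∑ w, Q w * g w) - t * (∑ w, P w * f w - ∑ w, P w * g w) := by
    simp only [Finset.mul_sum, ← Finset.sum_sub_distrib]
    exact Finset.sum_congr rfl fun w _ => by ring
  have hneg := Finset.sum_nonpos fun w (_ : w ∈ univ) => hpoint w
  rw [hsum] at hneg
  exact sub_nonneg.1 ((mul_nonneg_iff_of_pos_left ht).1 (by linarith))

lemma weightedTail_le_of_refines (hQ0 : ∀ z, 0 ≤ Q z) (hQ1 : ∑ z, Q z = 1)
    (hP : ∀ w, 0 < P w) (hC : ∀ z w, Q z / P z < Q w / P w → C z < C w) (B : ι → ℝ)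
    {ε : ℝ} (hε0 : 0 < ε) (hε1 : ε < 1) : weightedTail P Q C ε ≤ weightedTail P Q B ε := by
  classical
  set g := fun w => pValueTail Q C (C w) ε
  have hvalid : ∑ w, Q w * g w = 1 - ε := sum_mul_pValueTail hQ0 hQ1 hε0.le hε1.le
  have hsupp : (univ.filter fun w => 0 < g w).Nonempty := by
    obtain ⟨w, -, hw⟩ := Finset.exists_lt_of_sum_lt (f := fun _ => (0:ℝ)) (s := univ)
      (by rw [hvalid, sum_const_zero]; linarith)
    exact ⟨w, mem_filter.2 ⟨mem_univ w, pos_of_mul_pos_right hw (hQ0 w)⟩⟩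
  obtain ⟨w₀, hw₀, hmin⟩ := exists_min_image _ (fun w => Q w / P w) hsupp
  set t := Q w₀ / P w₀
  have hg1 : ∀ w, t * P w < Q w → g w = 1 := fun w h =>
    pValueTail_eq_one_of_lt hQ0 (hC w₀ w ((lt_div_iff₀ (hP w)).2 h)) (mem_filter.1 hw₀).2
  have hg0 : ∀ w, Q w < t * P w → g w = 0 := fun w h => by
    refine le_antisymm (not_lt.1 fun hw => ?_) (pValueTail_nonneg _ _)
    exact (hmin w (mem_filter.2 ⟨mem_univ w, hw⟩)).not_gt ((div_lt_iff₀ (hP w)).2 h)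
  -- for `t = 0`, `g = 1` on the support of `Q`, against validity
  have ht : 0 < t := by
    refine (div_nonneg (hQ0 w₀) (hP w₀).le).lt_of_ne fun h0 => ?_
    replace h0 : t = 0 := h0.symm
    have : ∑ w, Q w * g w = 1 := by
      rw [← hQ1]
      refine Finset.sum_congr rfl fun w _ => ?_
      rcases (hQ0 w).eq_or_lt with h | h
      · rw [← h, zero_mul]
      · rw [hg1 w (by rwa [h0, zero_mul]), mul_one]
    linarith
  exact sum_mul_le_sum_mul_of_neyman_pearson ht (fun _ => pValueTail_nonneg _ _)
    (fun _ => pValueTail_le_one _ _) hg0 hg1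
    (by rw [hvalid, sum_mul_pValueTail hQ0 hQ1 hε0.le hε1.le])

lemma intervalIntegrable_weightedTail (hQ0 : ∀ z, 0 ≤ Q z) (C : ι → ℝ) :
    IntervalIntegrable (weightedTail P Q C) volume 0 1 := by
  have h : weightedTail P Q C = ∑ w, fun ε => P w * pValueTail Q C (C w) ε := by
    ext ε; simp [weightedTail, Finset.sum_apply]
  rw [h]
  exact IntervalIntegrable.sum univ fun w _ =>
    ((pValueTail_antitone hQ0 (C w)).intervalIntegrable).const_mul (P w)

lemma integral_weightedTail (hQ0 : ∀ z, 0 ≤ Q z) (hQ1 : ∑ z, Q z = 1) :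
    ∫ ε in (0:ℝ)..1, weightedTail P Q C ε = weightedMean P Q C := by
  unfold weightedTail weightedMean
  rw [intervalIntegral.integral_finsetSum fun w _ =>
    ((pValueTail_antitone hQ0 (C w)).intervalIntegrable).const_mul (P w)]
  exact Finset.sum_congr rfl fun w _ => by
    rw [intervalIntegral.integral_const_mul, integral_pValueTail hQ0 hQ1]

lemma weightedMean_le_of_weightedTail_le (hQ0 : ∀ z, 0 ≤ Q z) (hQ1 : ∑ z, Q z = 1)
    {B : ι → ℝ} (h : ∀ ε ∈ Set.Ioo (0:ℝ) 1, weightedTail P Q C ε ≤ weightedTail P Q B ε) :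
    weightedMean P Q C ≤ weightedMean P Q B := by
  rw [← integral_weightedTail hQ0 hQ1, ← integral_weightedTail hQ0 hQ1]
  exact intervalIntegral.integral_mono_on_of_le_Ioo zero_le_one
    (intervalIntegrable_weightedTail hQ0 C) (intervalIntegrable_weightedTail hQ0 B) h

lemma pValueMean_eq_sum_sign (a : ℝ) :
    pValueMean Q C a = ∑ z, Q z * (1 + Real.sign (a - C z)) / 2 := by
  rw [pValueMean, massBelow, massAt, Finset.sum_div, ← Finset.sum_add_distrib]
  refine Finset.sum_congr rfl fun z _ => ?_
  rcases lt_trichotomy (C z) a with h | h | h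
  · simp [h, h.ne, Real.sign_of_pos (sub_pos.2 h)]; ring
  · simp [h]
  · simp [h.not_gt, h.ne', Real.sign_of_neg (sub_neg.2 h)]

lemma two_mul_weightedMean : 2 * weightedMean P Q C = ∑ z, ∑ w,
    (Q z * P w * (1 + Real.sign (C w - C z)) + Q w * P z * (1 - Real.sign (C w - C z))) / 2 := by
  have h1 : weightedMean P Q C
      = ∑ z, ∑ w, Q z * P w * (1 + Real.sign (C w - C z)) / 2 := by
    simp only [weightedMean, pValueMean_eq_sum_sign, Finset.mul_sum]
    rw [Finset.sum_comm]
    exact Finset.sum_congr rfl fun z _ => Finset.sum_congr rfl fun w _ => by ring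
  have h2 : weightedMean P Q C
      = ∑ z, ∑ w, Q w * P z * (1 - Real.sign (C w - C z)) / 2 := by
    simp only [weightedMean, pValueMean_eq_sum_sign, Finset.mul_sum]
    refine Finset.sum_congr rfl fun z _ => Finset.sum_congr rfl fun w _ => ?_
    rw [← neg_sub, Real.sign_neg]; ring
  rw [two_mul]
  nth_rw 1 [h1]
  rw [h2, ← Finset.sum_add_distrib]
  refine Finset.sum_congr rfl fun z _ => ?_
  rw [← Finset.sum_add_distrib]
  exact Finset.sum_congr rfl fun w _ => by ring

lemma sum_min_le_two_mul_weightedMean :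
    ∑ z, ∑ w, min (Q z * P w) (Q w * P z) ≤ 2 * weightedMean P Q C := by
  rw [two_mul_weightedMean]
  gcongr with z _ w _
  exact min_le_sign_combination _ _ _

lemma two_mul_weightedMean_eq_iff (hP : ∀ w, 0 < P w) :
    2 * weightedMean P Q C = ∑ z, ∑ w, min (Q z * P w) (Q w * P z) ↔
      ∀ z w, Q z / P z < Q w / P w → C z < C w := by
  have hratio : ∀ z w, Q z / P z < Q w / P w ↔ Q z * P w < Q w * P z := fun z w =>
    div_lt_div_iff₀ (hP z) (hP w)
  have hle : ∀ z w, min (Q z * P w) (Q w * P z)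
      ≤ (Q z * P w * (1 + Real.sign (C w - C z)) + Q w * P z * (1 - Real.sign (C w - C z))) / 2 :=
    fun z w => min_le_sign_combination _ _ _
  rw [two_mul_weightedMean, eq_comm,
    Finset.sum_eq_sum_iff_of_le fun z _ => Finset.sum_le_sum fun w _ => hle z w]
  constructor
  · intro h z w hzw
    have hz := (Finset.sum_eq_sum_iff_of_le fun w _ => hle z w).1 (h z (mem_univ z)) w
      (mem_univ w)
    exact sub_pos.1 (((sign_combination_eq_min_iff _ _ _).1 hz.symm).1 ((hratio z w).1 hzw))
  · intro hC z _
    refine Finset.sum_congr rfl fun w _ => ((sign_combination_eq_min_iff _ _ _).2 ⟨?_, ?_⟩).symm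
    · exact fun h => sub_pos.2 (hC z w ((hratio z w).2 h))
    · exact fun h => sub_neg.2 (hC w z ((hratio w z).2 h))

lemma weightedMean_le_iff (hP : ∀ w, 0 < P w) :
    (∀ B, weightedMean P Q C ≤ weightedMean P Q B) ↔
      ∀ z w, Q z / P z < Q w / P w → C z < C w := by
  have hratio := (two_mul_weightedMean_eq_iff (C := fun w => Q w / P w) hP).2 fun _ _ h => h
  constructor
  · intro h
    refine (two_mul_weightedMean_eq_iff hP).1 (le_antisymm ?_ sum_min_le_two_mul_weightedMean)
    linarith [h fun w => Q w / P w]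
  · intro hC B
    linarith [(two_mul_weightedMean_eq_iff hP).2 hC,
      sum_min_le_two_mul_weightedMean (P := P) (Q := Q) (C := B)]

end Criteria

section ExampleSpace

variable {X Y : Type*} [Fintype X] [Fintype Y] {Q : X × Y → ℝ}

lemma sum_mul_comp_fst (G : X → ℝ) : ∑ z, Q z * G z.1 = ∑ x, margX Q x * G x := by
  rw [Fintype.sum_prod_type]
  exact Finset.sum_congr rfl fun x _ => by rw [margX, Finset.sum_mul]

lemma sum_margX_mul_sum (H : X × Y → ℝ) :
    ∑ x, margX Q x * ∑ y, H (x, y) = ∑ w, margX Q w.1 * H w := by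
  rw [Fintype.sum_prod_type]
  exact Finset.sum_congr rfl fun x _ => Finset.mul_sum _ _ _

lemma expXT_sum {F : X × Y → ℝ → ℝ} (hF : ∀ w, IntervalIntegrable (F w) volume 0 1) :
    expXT Q (fun x τ => ∑ y, F (x, y) τ) = ∑ w, margX Q w.1 * ∫ τ in (0:ℝ)..1, F w τ := by
  rw [expXT, ← sum_margX_mul_sum]
  exact Finset.sum_congr rfl fun x _ => by
    rw [intervalIntegral.integral_finsetSum fun y _ => hF (x, y)]

lemma expZT_sum_erase [DecidableEq Y] {F : X × Y → ℝ → ℝ}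
    (hF : ∀ w, IntervalIntegrable (F w) volume 0 1) :
    expZT Q (fun z τ => ∑ y ∈ univ.erase z.2, F (z.1, y) τ)
      = ∑ w, margX Q w.1 * (∫ τ in (0:ℝ)..1, F w τ) - ∑ z, Q z * ∫ τ in (0:ℝ)..1, F z τ := by
  have h : ∀ z : X × Y, ∫ τ in (0:ℝ)..1, ∑ y ∈ univ.erase z.2, F (z.1, y) τ
      = ∑ y, (∫ τ in (0:ℝ)..1, F (z.1, y) τ) - ∫ τ in (0:ℝ)..1, F z τ := fun z => by
    rw [intervalIntegral.integral_finsetSum fun y _ => hF (z.1, y),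
      Finset.sum_erase_eq_sub (mem_univ z.2)]
  simp only [expZT, h, mul_sub, Finset.sum_sub_distrib]
  rw [sum_mul_comp_fst fun x => ∑ y, ∫ τ in (0:ℝ)..1, F (x, y) τ,
    sum_margX_mul_sum fun w => ∫ τ in (0:ℝ)..1, F w τ]

lemma pValue_eq (C : X × Y → ℝ) (x : X) (y : Y) (τ : ℝ) :
    pValue Q C x y τ = massBelow Q C (C (x, y)) + τ * massAt Q C (C (x, y)) := rfl

variable (Q) in
lemma intervalIntegrable_pValue (C : X × Y → ℝ) (w : X × Y) :
    IntervalIntegrable (fun τ => pValue Q C w.1 w.2 τ) volume 0 1 :=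
  (continuous_const.add (continuous_id.mul continuous_const)).intervalIntegrable _ _

lemma intervalIntegrable_ite_lt_pValue (hQ0 : ∀ z, 0 ≤ Q z) (C : X × Y → ℝ) (ε : ℝ)
    (w : X × Y) :
    IntervalIntegrable (fun τ => if ε < pValue Q C w.1 w.2 τ then (1:ℝ) else 0) volume 0 1 := by
  refine Monotone.intervalIntegrable fun τ τ' hτ => ?_
  have hmono := mul_le_mul_of_nonneg_right hτ (massAt_nonneg (C := C) hQ0 (C w))
  simp only [pValue_eq, Prod.mk.eta]
  split_ifs with h h'
  · exact le_rfl
  · exact absurd (h.trans_le (by linarith)) h'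
  · exact zero_le_one
  · exact le_rfl

variable (Q) in
lemma integral_pValue (C : X × Y → ℝ) (w : X × Y) :
    ∫ τ in (0:ℝ)..1, pValue Q C w.1 w.2 τ = pValueMean Q C (C w) := by
  simp [pValue_eq, pValueMean, integral_id]
  ring

lemma integral_ite_lt_pValue (hQ0 : ∀ z, 0 ≤ Q z) (C : X × Y → ℝ) (ε : ℝ) (w : X × Y) :
    ∫ τ in (0:ℝ)..1, (if ε < pValue Q C w.1 w.2 τ then (1:ℝ) else 0) = pValueTail Q C (C w) ε :=
  integral_ite_lt_add_mul (massAt_nonneg hQ0 (C w))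

variable (Q) in
lemma expXT_sum_pValue (C : X × Y → ℝ) :
    expXT Q (fun x τ => ∑ y, pValue Q C x y τ) = weightedMean (fun w => margX Q w.1) Q C := by
  rw [expXT_sum (F := fun w τ => pValue Q C w.1 w.2 τ) (intervalIntegrable_pValue Q C)]
  exact Finset.sum_congr rfl fun w _ => by rw [integral_pValue]

lemma expZT_sum_erase_pValue [DecidableEq Y] (hQ1 : ∑ z, Q z = 1) (C : X × Y → ℝ) :
    expZT Q (fun z τ => ∑ y ∈ univ.erase z.2, pValue Q C z.1 y τ)
      = weightedMean (fun w => margX Q w.1) Q C - 1 / 2 := by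
  rw [expZT_sum_erase (F := fun w τ => pValue Q C w.1 w.2 τ) (intervalIntegrable_pValue Q C)]
  simp only [integral_pValue, sum_mul_pValueMean, hQ1]
  norm_num [weightedMean]

lemma expXT_card_predSet (hQ0 : ∀ z, 0 ≤ Q z) (C : X × Y → ℝ) (ε : ℝ) :
    expXT Q (fun x τ => ((predSet Q C ε x τ).card : ℝ))
      = weightedTail (fun w => margX Q w.1) Q C ε := by
  simp only [predSet, natCast_card_filter]
  rw [expXT_sum (F := fun w τ => if ε < pValue Q C w.1 w.2 τ then (1:ℝ) else 0)
    (intervalIntegrable_ite_lt_pValue hQ0 C ε)]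
  exact Finset.sum_congr rfl fun w _ => by rw [integral_ite_lt_pValue hQ0]

lemma expZT_card_erase_predSet [DecidableEq Y] (hQ0 : ∀ z, 0 ≤ Q z) (hQ1 : ∑ z, Q z = 1)
    (C : X × Y → ℝ) {ε : ℝ} (hε0 : 0 ≤ ε) (hε1 : ε ≤ 1) :
    expZT Q (fun z τ => (((predSet Q C ε z.1 τ).erase z.2).card : ℝ))
      = weightedTail (fun w => margX Q w.1) Q C ε - (1 - ε) := by
  simp only [predSet, ← Finset.filter_erase, natCast_card_filter]
  rw [expZT_sum_erase (F := fun w τ => if ε < pValue Q C w.1 w.2 τ then (1:ℝ) else 0)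
    (intervalIntegrable_ite_lt_pValue hQ0 C ε)]
  simp only [integral_ite_lt_pValue hQ0, sum_mul_pValueTail hQ0 hQ1 hε0 hε1]
  rfl

end ExampleSpace

theorem stmt0_general {X Y : Type*} [Fintype X] [Fintype Y] [DecidableEq Y]
    (Q : X × Y → ℝ) (hQ0 : ∀ z, 0 ≤ Q z)
    (hQ1 : ∑ z : X × Y, Q z = 1) (hQX : ∀ x, 0 < margX Q x) (A : X × Y → ℝ) :
    (SOpt Q A ↔ OFOpt Q A) ∧ (OFOpt Q A ↔ NOpt Q A) ∧ (NOpt Q A ↔ OEOpt Q A) ∧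
      (OEOpt Q A ↔ Refines A (condQ Q)) := by
  have hP : ∀ w : X × Y, 0 < margX Q w.1 := fun w => hQX w.1
  have hS : SOpt Q A ↔ Refines A (condQ Q) := by
    simp only [SOpt, expXT_sum_pValue]
    exact weightedMean_le_iff hP
  have hOF : OFOpt Q A ↔ SOpt Q A := by
    simp only [OFOpt, SOpt, expZT_sum_erase_pValue hQ1, expXT_sum_pValue, sub_le_sub_iff_right]
  have hN : NOpt Q A ↔ Refines A (condQ Q) := by
    simp only [NOpt, expXT_card_predSet hQ0]
    exact ⟨fun h => hS.1 fun B => by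
        simpa only [expXT_sum_pValue] using weightedMean_le_of_weightedTail_le hQ0 hQ1 (h B),
      fun h B ε hε => weightedTail_le_of_refines hQ0 hQ1 hP h B hε.1 hε.2⟩
  have hOE : OEOpt Q A ↔ NOpt Q A := by
    refine forall_congr' fun B => forall₂_congr fun ε hε => ?_
    rw [expZT_card_erase_predSet hQ0 hQ1 A hε.1.le hε.2.le,
      expZT_card_erase_predSet hQ0 hQ1 B hε.1.le hε.2.le, expXT_card_predSet hQ0,
      expXT_card_predSet hQ0, sub_le_sub_iff_right]
  exact ⟨hOF.symm, hOF.trans (hS.trans hN.symm), hOE.symm, hOE.trans hN⟩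

/-- **Theorem 1 (Vovk et al.):** `O(S) = O(OF) = O(N) = O(OE) = R(CP)`. -/
theorem stmt0 {X Y : Type*} [Fintype X] [Fintype Y] [DecidableEq Y] [Nonempty X]
    (hY : 2 ≤ Fintype.card Y) (Q : X × Y → ℝ) (hQ0 : ∀ z, 0 ≤ Q z)
    (hQ1 : ∑ z : X × Y, Q z = 1) (hQX : ∀ x, 0 < margX Q x) (A : X × Y → ℝ) :
    (SOpt Q A ↔ OFOpt Q A) ∧ (OFOpt Q A ↔ NOpt Q A) ∧ (NOpt Q A ↔ OEOpt Q A) ∧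
      (OEOpt Q A ↔ Refines A (condQ Q)) :=
  stmt0_general Q hQ0 hQ1 hQX A
end

section
/- If an idealised conformity measure A is M-optimal, then for every significance level ε ∈ (0,1), Prob_{x,τ}(|Γ_A^ε(x,τ)| > 1) · Prob_{x,τ}(|Γ_A^ε(x,τ)| = 0) = 0. -/
/-!
Let `s x` and `t x` be the probabilities, over `τ`, that `A` excludes at level `ε` a second-best
and a best label at `x`; multiple predictions then have probability `∑ Q_X(x) (1 - s x)` and
empty ones `∑ Q_X(x) t x`. The smoothed p-value is exactly uniform, and every label other than the
best is excluded at least as often as the second-best one, so for a choice function `ŷ`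
`∑ (Q_X(x) - Q(x, ŷ x)) s x + ∑ Q(x, ŷ x) t x ≤ ε`.
If empty predictions have positive probability, strictly less than `ε` is thus left for `s`.
The signed predictability measure spends all of `ε` on its own `s` (unless the non-chosen labels
carry mass at most `ε`, when it never predicts two labels), excluding non-chosen labels in order of
decreasing predictability. This greedy choice solves the fractional knapsack problem of maximising
`∑ Q_X s` subject to `∑ (Q_X - Q(·, ŷ)) s ≤ ε`, so the measure makes multiple predictions strictly
less often than `A`, contradicting M-optimality.
-/

open Finset MeasureTheory

section Sums

variable {α β : Type*} [Fintype α]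

lemma sum_ite_le_sum_ite {Q : α → ℝ} (hQ : ∀ a, 0 ≤ Q a) {p q : α → Prop} [DecidablePred p]
    [DecidablePred q] (h : ∀ a, p a → q a) :
    (∑ a, if p a then Q a else 0) ≤ ∑ a, if q a then Q a else 0 :=
  sum_le_sum fun a _ => by
    by_cases hp : p a
    · simp [hp, h a hp]
    · by_cases hq : q a <;> simp [hp, hq, hQ a]

lemma sum_ite_nonneg {Q : α → ℝ} (hQ : ∀ a, 0 ≤ Q a) (p : α → Prop) [DecidablePred p] :
    0 ≤ ∑ a, if p a then Q a else 0 :=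
  sum_nonneg fun a _ => ite_nonneg (hQ a) le_rfl

variable [LinearOrder β]

lemma sum_ite_lt_add_sum_ite_eq (Q : α → ℝ) (C : α → β) (v : β) :
    (∑ a, if C a < v then Q a else 0) + (∑ a, if C a = v then Q a else 0)
      = ∑ a, if C a ≤ v then Q a else 0 := by
  rw [← sum_add_distrib]
  refine sum_congr rfl fun a _ => ?_
  rcases lt_trichotomy (C a) v with h | h | h
  · simp [h, h.le, h.ne]
  · simp [h]
  · simp [not_lt_of_gt h, h.ne', not_le_of_gt h]

/-- Telescoping over the levels of `C`, which cut the total mass into consecutive pieces. -/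
lemma sum_image_sub_eq (Q : α → ℝ) (C : α → β) {F : ℝ → ℝ} (hF : F 0 = 0) :
    ∑ v ∈ univ.image C, (F (∑ a, if C a ≤ v then Q a else 0) - F (∑ a, if C a < v then Q a else 0))
      = F (∑ a, Q a) := by
  classical
  suffices key : ∀ V : Finset β, (∀ a, ∀ v ∈ V, C a ≤ v → C a ∈ V) →
      ∑ v ∈ V, (F (∑ a, if C a ≤ v then Q a else 0) - F (∑ a, if C a < v then Q a else 0))
        = F (∑ a, if C a ∈ V then Q a else 0) by
    simpa using key _ fun a _ _ _ => mem_image_of_mem C (mem_univ a)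
  intro V
  induction V using Finset.induction_on_max with
  | empty => simp [hF]
  | insert b V hb ih =>
    intro hclosed
    have hbV : b ∉ V := fun h => lt_irrefl b (hb b h)
    have hle : ∀ a, C a ≤ b ↔ C a ∈ insert b V := fun a =>
      ⟨fun h => hclosed a b (mem_insert_self b V) h, fun h => by
        rcases mem_insert.1 h with h | h
        · exact h.le
        · exact (hb _ h).le⟩
    have hlt : ∀ a, C a < b ↔ C a ∈ V := fun a =>
      ⟨fun h => (mem_insert.1 (hclosed a b (mem_insert_self b V) h.le)).resolve_left h.ne,
        hb _⟩
    have hV : ∀ a, ∀ v ∈ V, C a ≤ v → C a ∈ V := fun a v hv h =>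
      (hlt a).1 (h.trans_lt (hb v hv))
    rw [sum_insert hbV, ih hV]
    simp only [hle, hlt]
    ring

end Sums

lemma integral_ite_le_eq_min_sub_min {a b ε : ℝ} (hab : a ≤ b) :
    ∫ u in a..b, (if u ≤ ε then (1:ℝ) else 0) = min ε b - min ε a := by
  have hind : (fun u : ℝ => if u ≤ ε then (1:ℝ) else 0) = (Set.Iic ε).indicator fun _ => 1 := by
    funext u; simp [Set.indicator_apply]
  have hinter : Set.Ioc a b ∩ Set.Iic ε = Set.Ioc a (min b ε) := by
    ext u; simp
  rw [hind, intervalIntegral.integral_of_le hab, setIntegral_indicator measurableSet_Iic, hinter,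
    setIntegral_const, Real.volume_real_Ioc, smul_eq_mul, mul_one]
  rcases le_total ε a with h | h
  · rw [min_eq_left h, min_eq_left (h.trans hab), max_eq_right (by linarith [min_le_right b ε])]
    ring
  · rw [min_eq_right h, max_eq_left (by simp [h, hab]), min_comm]

lemma mul_integral_ite_add_mul_le {L m ε : ℝ} (hm : 0 ≤ m) :
    m * ∫ τ in (0:ℝ)..1, (if L + τ * m ≤ ε then (1:ℝ) else 0) = min ε (L + m) - min ε L := by
  rcases hm.eq_or_lt with rfl | hm
  · simp
  have := intervalIntegral.integral_comp_mul_add (fun u : ℝ => if u ≤ ε then (1:ℝ) else 0)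
    hm.ne' L (a := 0) (b := 1)
  simp only [mul_zero, zero_add, mul_one, smul_eq_mul] at this
  simp_rw [add_comm L, mul_comm _ m, this, ← mul_assoc, mul_inv_cancel₀ hm.ne', one_mul]
  rw [integral_ite_le_eq_min_sub_min (by linarith), add_comm]

section PValues

variable {X Y : Type*} [Fintype X] [Fintype Y] {Q : X × Y → ℝ} {C : X × Y → ℝ} {ε : ℝ}

noncomputable def exclusionProb (Q C : X × Y → ℝ) (ε : ℝ) (z : X × Y) : ℝ :=
  ∫ τ in (0:ℝ)..1, if pValue Q C z.1 z.2 τ ≤ ε then 1 else 0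

lemma sum_lt_le_pValue (hQ : ∀ z, 0 ≤ Q z) {x : X} {y : Y} {τ : ℝ} (hτ : 0 ≤ τ) :
    (∑ z, if C z < C (x, y) then Q z else 0) ≤ pValue Q C x y τ :=
  le_add_of_nonneg_right (mul_nonneg hτ (sum_ite_nonneg hQ _))

lemma pValue_le_sum_le (hQ : ∀ z, 0 ≤ Q z) {x : X} {y : Y} {τ : ℝ} (hτ : τ ≤ 1) :
    pValue Q C x y τ ≤ ∑ z, if C z ≤ C (x, y) then Q z else 0 := by
  rw [← sum_ite_lt_add_sum_ite_eq, pValue]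
  gcongr
  exact mul_le_of_le_one_left (sum_ite_nonneg hQ _) hτ

lemma pValue_le_pValue (hQ : ∀ z, 0 ≤ Q z) {x x' : X} {y y' : Y} {τ : ℝ} (hτ : τ ∈ Set.Icc 0 1)
    (h : C (x, y) ≤ C (x', y')) : pValue Q C x y τ ≤ pValue Q C x' y' τ := by
  rcases h.lt_or_eq with h | h
  · calc pValue Q C x y τ ≤ ∑ z, if C z ≤ C (x, y) then Q z else 0 := pValue_le_sum_le hQ hτ.2
      _ ≤ ∑ z, if C z < C (x', y') then Q z else 0 :=
        sum_ite_le_sum_ite hQ fun z hz => hz.trans_lt h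
      _ ≤ pValue Q C x' y' τ := sum_lt_le_pValue hQ hτ.1
  · simp only [pValue, h, le_refl]

lemma intervalIntegrable_exclusion (hQ : ∀ z, 0 ≤ Q z) (z : X × Y) :
    IntervalIntegrable (fun τ => if pValue Q C z.1 z.2 τ ≤ ε then (1:ℝ) else 0) volume 0 1 := by
  refine Antitone.intervalIntegrable fun τ τ' hττ' => ?_
  have : pValue Q C z.1 z.2 τ ≤ pValue Q C z.1 z.2 τ' := by
    unfold pValue; gcongr; exact sum_ite_nonneg hQ _
  by_cases h' : pValue Q C z.1 z.2 τ' ≤ ε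
  · simp [h', this.trans h']
  · by_cases h : pValue Q C z.1 z.2 τ ≤ ε <;> simp [h, h']

lemma exclusionProb_nonneg (z : X × Y) : 0 ≤ exclusionProb Q C ε z :=
  intervalIntegral.integral_nonneg zero_le_one fun _ _ => ite_nonneg zero_le_one le_rfl

lemma exclusionProb_le_one (hQ : ∀ z, 0 ≤ Q z) (z : X × Y) : exclusionProb Q C ε z ≤ 1 := by
  have := intervalIntegral.integral_mono_on zero_le_one
    (intervalIntegrable_exclusion (C := C) (ε := ε) hQ z) intervalIntegrable_const
    fun τ _ => (ite_le_one le_rfl zero_le_one : _ ≤ (1:ℝ))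
  simpa [exclusionProb] using this

lemma exclusionProb_anti (hQ : ∀ z, 0 ≤ Q z) {z z' : X × Y} (h : C z ≤ C z') :
    exclusionProb Q C ε z' ≤ exclusionProb Q C ε z := by
  refine intervalIntegral.integral_mono_on zero_le_one (intervalIntegrable_exclusion hQ z')
    (intervalIntegrable_exclusion hQ z) fun τ hτ => ?_
  have hp := pValue_le_pValue hQ hτ h
  by_cases h' : pValue Q C z'.1 z'.2 τ ≤ ε
  · simp [h', hp.trans h']
  · by_cases h'' : pValue Q C z.1 z.2 τ ≤ ε <;> simp [h', h'']

lemma exclusionProb_eq_zero_of_lt (hQ : ∀ z, 0 ≤ Q z) {z : X × Y}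
    (h : ε < ∑ z', if C z' < C z then Q z' else 0) : exclusionProb Q C ε z = 0 := by
  have : exclusionProb Q C ε z = ∫ _ in (0:ℝ)..1, (0:ℝ) := by
    refine intervalIntegral.integral_congr fun τ hτ => ?_
    rw [Set.uIcc_of_le zero_le_one] at hτ
    exact if_neg (h.trans_le (sum_lt_le_pValue hQ hτ.1)).not_ge
  simp [this]

lemma exclusionProb_eq_one_of_le (hQ : ∀ z, 0 ≤ Q z) {z : X × Y}
    (h : (∑ z', if C z' ≤ C z then Q z' else 0) ≤ ε) : exclusionProb Q C ε z = 1 := by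
  have : exclusionProb Q C ε z = ∫ _ in (0:ℝ)..1, (1:ℝ) := by
    refine intervalIntegral.integral_congr fun τ hτ => ?_
    rw [Set.uIcc_of_le zero_le_one] at hτ
    exact if_pos ((pValue_le_sum_le hQ hτ.2).trans h)
  simp [this]

lemma exclusionProb_congr (hQ : ∀ z, 0 ≤ Q z) {z z' : X × Y} (h : C z = C z') :
    exclusionProb Q C ε z = exclusionProb Q C ε z' :=
  le_antisymm (exclusionProb_anti hQ h.ge) (exclusionProb_anti hQ h.le)

lemma exclusionProb_eq_one_of_lt (hQ : ∀ z, 0 ≤ Q z) {z z' : X × Y} (h : C z < C z')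
    (hz' : 0 < exclusionProb Q C ε z') : exclusionProb Q C ε z = 1 := by
  refine exclusionProb_eq_one_of_le hQ ((sum_ite_le_sum_ite hQ fun a ha => ha.trans_lt h).trans ?_)
  by_contra hlt
  exact hz'.ne' (exclusionProb_eq_zero_of_lt hQ (not_le.1 hlt))

lemma sum_level_mul_exclusionProb (hQ : ∀ z, 0 ≤ Q z) (v : ℝ) :
    ∑ z with C z = v, Q z * exclusionProb Q C ε z
      = min ε (∑ z, if C z ≤ v then Q z else 0) - min ε (∑ z, if C z < v then Q z else 0) := by
  have hlevel : ∀ z ∈ univ.filter (C · = v), exclusionProb Q C ε z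
      = ∫ τ in (0:ℝ)..1, if (∑ z, if C z < v then Q z else 0)
          + τ * (∑ z, if C z = v then Q z else 0) ≤ ε then (1:ℝ) else 0 := by
    intro z hz
    simp only [exclusionProb, pValue, Prod.mk.eta, (mem_filter.1 hz).2]
  rw [sum_congr rfl fun z hz => congrArg (Q z * ·) (hlevel z hz), ← sum_mul, sum_filter,
    mul_integral_ite_add_mul_le (sum_ite_nonneg hQ _), sum_ite_lt_add_sum_ite_eq]

/-- Exact validity of the smoothed p-value: it is uniformly distributed under `Q ⊗ U[0,1]`. -/
theorem sum_mul_exclusionProb (hQ : ∀ z, 0 ≤ Q z) (hε : 0 ≤ ε) :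
    ∑ z, Q z * exclusionProb Q C ε z = min ε (∑ z, Q z) := by
  classical
  rw [← sum_fiberwise_of_maps_to (fun z _ => mem_image_of_mem C (mem_univ z)),
    ← sum_image_sub_eq Q C (F := min ε) (min_eq_right hε)]
  exact sum_congr rfl fun v _ => sum_level_mul_exclusionProb hQ v

end PValues

section PredictionSets

variable {X Y : Type*} [Fintype X] [Fintype Y] {Q : X × Y → ℝ}
  {C : X × Y → ℝ} {ε : ℝ}

lemma card_predSet_eq_zero_iff (hQ : ∀ z, 0 ≤ Q z) {x : X} {top : Y}
    (htop : ∀ y, C (x, y) ≤ C (x, top)) {τ : ℝ} (hτ : τ ∈ Set.Icc 0 1) :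
    (predSet Q C ε x τ).card = 0 ↔ pValue Q C x top τ ≤ ε := by
  simp only [card_eq_zero, predSet, filter_eq_empty_iff, mem_univ, true_implies, not_lt]
  exact ⟨fun h => @h top, fun h y => (pValue_le_pValue hQ hτ (htop y)).trans h⟩

lemma one_lt_card_predSet_iff (hQ : ∀ z, 0 ≤ Q z) {x : X} {top sec : Y} (hne : sec ≠ top)
    (htop : ∀ y, C (x, y) ≤ C (x, top)) (hsec : ∀ y, y ≠ top → C (x, y) ≤ C (x, sec))
    {τ : ℝ} (hτ : τ ∈ Set.Icc 0 1) :
    1 < (predSet Q C ε x τ).card ↔ ε < pValue Q C x sec τ := by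
  have hmem : ∀ y, y ∈ predSet Q C ε x τ ↔ ε < pValue Q C x y τ := by simp [predSet]
  rw [one_lt_card]
  constructor
  · rintro ⟨a, ha, b, hb, hab⟩
    obtain ⟨y, hy, hyt⟩ : ∃ y ∈ predSet Q C ε x τ, y ≠ top := by
      by_cases hat : a = top
      · exact ⟨b, hb, fun hbt => hab (hat.trans hbt.symm)⟩
      · exact ⟨a, ha, hat⟩
    exact ((hmem y).1 hy).trans_le (pValue_le_pValue hQ hτ (hsec y hyt))
  · intro h
    exact ⟨sec, (hmem sec).2 h, top, (hmem top).2 (h.trans_le (pValue_le_pValue hQ hτ (htop sec))),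
      hne⟩

open Classical in
lemma probXT_eq_sum_margX_mul {P : X → ℝ → Prop} {g : X → ℝ → ℝ}
    (hP : ∀ x, ∀ τ ∈ Set.Icc (0:ℝ) 1, (if P x τ then 1 else 0) = g x τ) :
    probXT Q P = ∑ x, margX Q x * ∫ τ in (0:ℝ)..1, g x τ := by
  refine sum_congr rfl fun x _ => congrArg _ (intervalIntegral.integral_congr fun τ hτ => ?_)
  rw [Set.uIcc_of_le zero_le_one] at hτ
  exact hP x τ hτ

lemma probXT_card_eq_zero (hQ : ∀ z, 0 ≤ Q z) {top : X → Y}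
    (htop : ∀ x y, C (x, y) ≤ C (x, top x)) :
    probXT Q (fun x τ => (predSet Q C ε x τ).card = 0)
      = ∑ x, margX Q x * exclusionProb Q C ε (x, top x) :=
  probXT_eq_sum_margX_mul fun x τ hτ => by
    simp only [card_predSet_eq_zero_iff hQ (htop x) hτ]

lemma probXT_one_lt_card (hQ : ∀ z, 0 ≤ Q z) {top sec : X → Y} (hne : ∀ x, sec x ≠ top x)
    (htop : ∀ x y, C (x, y) ≤ C (x, top x)) (hsec : ∀ x y, y ≠ top x → C (x, y) ≤ C (x, sec x)) :
    probXT Q (fun x τ => 1 < (predSet Q C ε x τ).card)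
      = ∑ x, margX Q x * (1 - exclusionProb Q C ε (x, sec x)) := by
  rw [probXT_eq_sum_margX_mul (g := fun x τ => 1 - if pValue Q C x (sec x) τ ≤ ε then 1 else 0)]
  · refine sum_congr rfl fun x _ => ?_
    have := intervalIntegral.integral_sub (intervalIntegrable_const (c := (1:ℝ)))
      (intervalIntegrable_exclusion (C := C) (ε := ε) hQ (x, sec x))
    simp only [this, exclusionProb, intervalIntegral.integral_const, sub_zero, smul_eq_mul, mul_one]
  · intro x τ hτ
    by_cases h : pValue Q C x (sec x) τ ≤ ε
    · simp [one_lt_card_predSet_iff hQ (hne x) (htop x) (hsec x) hτ, h]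
    · simp [one_lt_card_predSet_iff hQ (hne x) (htop x) (hsec x) hτ, h, lt_of_not_ge h]

end PredictionSets

lemma add_mul_le_sum_mul {ι : Type*} [Fintype ι] [DecidableEq ι] {q r : ι → ℝ} {i j : ι} {s : ℝ}
    (hq : ∀ k, 0 ≤ q k) (hr : ∀ k, k ≠ i → s ≤ r k) (hri : r i ≤ s) (hqij : q i ≤ q j) :
    (∑ k, q k - q j) * s + q j * r i ≤ ∑ k, q k * r k := by
  have hrest : (∑ k ∈ univ.erase i, q k) * s ≤ ∑ k ∈ univ.erase i, q k * r k := by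
    rw [sum_mul]
    exact sum_le_sum fun k hk => mul_le_mul_of_nonneg_left (hr k (ne_of_mem_erase hk)) (hq k)
  rw [sum_erase_eq_sub (mem_univ i), sum_erase_eq_sub (mem_univ i)] at hrest
  nlinarith [mul_nonneg (sub_nonneg.2 hqij) (sub_nonneg.2 hri)]

/-- Weak duality for the fractional knapsack problem: `t` is optimal for the multiplier `l`. -/
lemma sum_mul_lt_sum_mul_of_complementary_slackness {ι : Type*} [Fintype ι] {w g s t : ι → ℝ}
    {l : ℝ} (hl : 0 < l) (hs : ∀ i, s i ∈ Set.Icc 0 1) (ht1 : ∀ i, l * g i < w i → t i = 1)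
    (ht0 : ∀ i, w i < l * g i → t i = 0) (hgst : ∑ i, g i * s i < ∑ i, g i * t i) :
    ∑ i, w i * s i < ∑ i, w i * t i := by
  have hterm : ∀ i, 0 ≤ (w i - l * g i) * (t i - s i) := fun i => by
    rcases lt_trichotomy (l * g i) (w i) with h | h | h
    · rw [ht1 i h]; exact mul_nonneg (by linarith) (by linarith [(hs i).2])
    · rw [h, sub_self, zero_mul]
    · rw [ht0 i h]; exact mul_nonneg_of_nonpos_of_nonpos (by linarith) (by linarith [(hs i).1])
  have hsplit : ∑ i, w i * t i - ∑ i, w i * s i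
      = ∑ i, (w i - l * g i) * (t i - s i) + l * (∑ i, g i * t i - ∑ i, g i * s i) := by
    simp only [← sum_sub_distrib, mul_sum, ← sum_add_distrib]
    exact sum_congr rfl fun i _ => by ring
  nlinarith [sum_nonneg fun i (_ : i ∈ univ) => hterm i]

lemma exists_top_second {X Y : Type*} [Fintype Y] (hY : 2 ≤ Fintype.card Y) (C : X × Y → ℝ) :
    ∃ top sec : X → Y, (∀ x, sec x ≠ top x) ∧ (∀ x y, C (x, y) ≤ C (x, top x)) ∧
      ∀ x y, y ≠ top x → C (x, y) ≤ C (x, sec x) := by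
  classical
  have : Nonempty Y := Fintype.card_pos_iff.1 (by omega)
  have hx : ∀ x, ∃ top sec : Y, sec ≠ top ∧ (∀ y, C (x, y) ≤ C (x, top)) ∧
      ∀ y, y ≠ top → C (x, y) ≤ C (x, sec) := fun x => by
    obtain ⟨top, -, htop⟩ := exists_max_image univ (fun y => C (x, y)) univ_nonempty
    obtain ⟨sec, hsec, hmax⟩ := exists_max_image (univ.erase top) (fun y => C (x, y)) (by
      rw [← card_pos, card_erase_of_mem (mem_univ _), card_univ]; omega)
    exact ⟨top, sec, ne_of_mem_erase hsec, fun y => htop y (mem_univ y),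
      fun y hy => hmax y (mem_erase.2 ⟨hy, mem_univ y⟩)⟩
  choose top sec h using hx
  exact ⟨top, sec, fun x => (h x).1, fun x => (h x).2.1, fun x => (h x).2.2⟩

section Budget

variable {X Y : Type*} [Fintype X] [Fintype Y] {Q : X × Y → ℝ} {C : X × Y → ℝ} {ε : ℝ}

lemma sum_exclusion_budget_le (hQ : ∀ z, 0 ≤ Q z) (hε : 0 ≤ ε) {top sec c : X → Y}
    (htop : ∀ x y, C (x, y) ≤ C (x, top x)) (hsec : ∀ x y, y ≠ top x → C (x, y) ≤ C (x, sec x))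
    (hc : ∀ x y, Q (x, y) ≤ Q (x, c x)) :
    ∑ x, ((margX Q x - Q (x, c x)) * exclusionProb Q C ε (x, sec x)
      + Q (x, c x) * exclusionProb Q C ε (x, top x)) ≤ ε := by
  classical
  calc _ ≤ ∑ x, ∑ y, Q (x, y) * exclusionProb Q C ε (x, y) :=
        sum_le_sum fun x _ => add_mul_le_sum_mul (fun y => hQ (x, y))
          (fun y hy => exclusionProb_anti hQ (hsec x y hy))
          (exclusionProb_anti hQ (htop x (sec x))) (hc x (top x))
    _ = min ε (∑ z, Q z) := by rw [← sum_mul_exclusionProb hQ hε, Fintype.sum_prod_type]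
    _ ≤ ε := min_le_left _ _

end Budget

section ChoiceFunctions

variable {X Y : Type*} [Fintype Y] {Q : X × Y → ℝ} {c : X → Y}

lemma exists_isChoiceFun [Nonempty Y] (Q : X × Y → ℝ) : ∃ c : X → Y, IsChoiceFun Q c := by
  choose c _ hc using fun x : X => exists_max_image univ (fun y => condQ Q (x, y)) univ_nonempty
  exact ⟨c, fun x => le_antisymm
    (le_ciSup (f := fun y => condQ Q (x, y)) (Finite.bddAbove_range _) (c x))
    (ciSup_le fun y => hc x y (mem_univ y))⟩

lemma IsChoiceFun.le (hc : IsChoiceFun Q c) {x : X} (hx : 0 < margX Q x) (y : Y) :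
    Q (x, y) ≤ Q (x, c x) := by
  have : condQ Q (x, y) ≤ condQ Q (x, c x) :=
    (le_ciSup (f := fun y => condQ Q (x, y)) (Finite.bddAbove_range _) y).trans_eq (hc x).symm
  exact (div_le_div_iff_of_pos_right hx).1 this

lemma IsChoiceFun.margX_sub (hc : IsChoiceFun Q c) {x : X} (hx : 0 < margX Q x) :
    margX Q x - Q (x, c x) = margX Q x * (1 - predictability Q x) := by
  rw [← hc x, condQ]
  field_simp

lemma IsChoiceFun.chosen_pos (hc : IsChoiceFun Q c) {x : X} (hx : 0 < margX Q x) :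
    0 < Q (x, c x) :=
  lt_of_not_ge fun h => hx.not_ge (sum_nonpos fun y _ => (hc.le hx y).trans h)

lemma IsChoiceFun.predictability_pos (hc : IsChoiceFun Q c) {x : X} (hx : 0 < margX Q x) :
    0 < predictability Q x := by
  rw [← hc x]
  exact div_pos (hc.chosen_pos hx) hx

end ChoiceFunctions

section SignedPredictability

variable {X Y : Type*} [Fintype Y] [DecidableEq Y] {Q : X × Y → ℝ} {c : X → Y}

lemma SPMeasure_of_ne {x : X} {y : Y} (h : y ≠ c x) :
    SPMeasure Q c (x, y) = -predictability Q x := by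
  simp [SPMeasure, h]

lemma SPMeasure_le_chosen (hc : IsChoiceFun Q c) (hQX : ∀ x, 0 < margX Q x) (x : X) (y : Y) :
    SPMeasure Q c (x, y) ≤ SPMeasure Q c (x, c x) := by
  have := (hc.predictability_pos (hQX x)).le
  by_cases h : y = c x
  · rw [h]
  · simp only [SPMeasure, h, if_true, if_false]; linarith

lemma sum_le_SPMeasure_le_sum_nonchosen [Fintype X] (hQ : ∀ z, 0 ≤ Q z) (hc : IsChoiceFun Q c)
    (hQX : ∀ x, 0 < margX Q x) {x : X} {y : Y} (hy : y ≠ c x) :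
    (∑ z, if SPMeasure Q c z ≤ SPMeasure Q c (x, y) then Q z else 0)
      ≤ ∑ z, if z.2 ≠ c z.1 then Q z else 0 := by
  refine sum_ite_le_sum_ite hQ fun z hz hzc => ?_
  rw [SPMeasure_of_ne hy, SPMeasure, if_pos hzc] at hz
  linarith [hc.predictability_pos (hQX x), hc.predictability_pos (hQX z.1)]

lemma sum_nonchosen_le_sum_SPMeasure_lt [Fintype X] (hQ : ∀ z, 0 ≤ Q z) (hc : IsChoiceFun Q c)
    (hQX : ∀ x, 0 < margX Q x) (x : X) :
    (∑ z, if z.2 ≠ c z.1 then Q z else 0)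
      ≤ ∑ z, if SPMeasure Q c z < SPMeasure Q c (x, c x) then Q z else 0 := by
  refine sum_ite_le_sum_ite hQ fun z hzc => ?_
  rw [SPMeasure, if_neg hzc, SPMeasure, if_pos rfl]
  linarith [hc.predictability_pos (hQX x), hc.predictability_pos (hQX z.1)]

end SignedPredictability

section Optimality

variable {X Y : Type*} [Fintype X] [Fintype Y] [DecidableEq Y] {Q : X × Y → ℝ} {c : X → Y}
  {ε : ℝ}

lemma sum_nonchosen_mul_exclusionProb_SPMeasure (hQ : ∀ z, 0 ≤ Q z) (hQX : ∀ x, 0 < margX Q x)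
    (hc : IsChoiceFun Q c) (hε : 0 ≤ ε) (hhard : ε < ∑ z, if z.2 ≠ c z.1 then Q z else 0)
    {sec : X → Y} (hsec : ∀ x, sec x ≠ c x) :
    ∑ x, (margX Q x - Q (x, c x)) * exclusionProb Q (SPMeasure Q c) ε (x, sec x) = ε := by
  have hchosen : ∀ x, exclusionProb Q (SPMeasure Q c) ε (x, c x) = 0 := fun x =>
    exclusionProb_eq_zero_of_lt hQ (hhard.trans_le (sum_nonchosen_le_sum_SPMeasure_lt hQ hc hQX x))
  have hx : ∀ x, ∑ y, Q (x, y) * exclusionProb Q (SPMeasure Q c) ε (x, y)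
      = (margX Q x - Q (x, c x)) * exclusionProb Q (SPMeasure Q c) ε (x, sec x) := fun x => by
    rw [← add_sum_erase _ _ (mem_univ (c x)), hchosen, mul_zero, zero_add,
      sum_congr rfl fun y hy => by
        rw [exclusionProb_congr hQ (z' := (x, sec x))
          (by rw [SPMeasure_of_ne (ne_of_mem_erase hy), SPMeasure_of_ne (hsec x)])],
      ← sum_mul, sum_erase_eq_sub (mem_univ _), margX]
  have hmass : ε ≤ ∑ z, Q z :=
    hhard.le.trans (sum_le_sum fun z _ => by split_ifs <;> simp [hQ z])
  have hvalid := sum_mul_exclusionProb (C := SPMeasure Q c) hQ hε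
  rw [Fintype.sum_prod_type, min_eq_left hmass] at hvalid
  exact (sum_congr rfl fun x _ => (hx x).symm).trans hvalid

lemma exists_threshold_exclusionProb_SPMeasure (hQ : ∀ z, 0 ≤ Q z) (hQX : ∀ x, 0 < margX Q x)
    (hc : IsChoiceFun Q c) {sec : X → Y} (hsec : ∀ x, sec x ≠ c x)
    (hpos : 0 < ∑ x, (margX Q x - Q (x, c x)) * exclusionProb Q (SPMeasure Q c) ε (x, sec x)) :
    ∃ θ < 1, (∀ x, θ < predictability Q x → exclusionProb Q (SPMeasure Q c) ε (x, sec x) = 1) ∧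
      ∀ x, predictability Q x < θ → exclusionProb Q (SPMeasure Q c) ε (x, sec x) = 0 := by
  set t : X → ℝ := fun x => exclusionProb Q (SPMeasure Q c) ε (x, sec x)
  set g : X → ℝ := fun x => margX Q x - Q (x, c x)
  have hgf : ∀ x, g x = margX Q x * (1 - predictability Q x) := fun x => hc.margX_sub (hQX x)
  obtain ⟨x₀, hx₀, hx₀min⟩ := exists_min_image (univ.filter fun x => 0 < g x * t x)
    (predictability Q) (by
      obtain ⟨x, -, hx⟩ := exists_lt_of_sum_lt (s := univ) (f := fun _ => (0:ℝ))
        (g := fun x => g x * t x) (by simpa using hpos)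
      exact ⟨x, mem_filter.2 ⟨mem_univ x, hx⟩⟩)
  have hg0 : 0 ≤ g x₀ := sub_nonneg.2 (single_le_sum (fun y _ => hQ (x₀, y)) (mem_univ (c x₀)))
  obtain ⟨hg₀, ht₀⟩ := (pos_and_pos_or_neg_and_neg_of_mul_pos (mem_filter.1 hx₀).2).resolve_right
    fun h => hg0.not_gt h.1
  rw [hgf] at hg₀
  have hθ := (mul_pos_iff_of_pos_left (hQX x₀)).1 hg₀
  refine ⟨predictability Q x₀, by linarith, fun x hx => ?_, fun x hx => ?_⟩
  · refine exclusionProb_eq_one_of_lt hQ (z' := (x₀, sec x₀)) ?_ ht₀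
    rw [SPMeasure_of_ne (hsec x), SPMeasure_of_ne (hsec x₀)]
    linarith
  · have hgx : 0 < g x := by
      rw [hgf]; exact mul_pos (hQX x) (by linarith)
    have hxS : ¬ 0 < g x * t x := fun h =>
      (hx₀min x (mem_filter.2 ⟨mem_univ x, h⟩)).not_gt hx
    exact le_antisymm (nonpos_of_mul_nonpos_right (not_lt.1 hxS) hgx) (exclusionProb_nonneg _)

theorem sum_margX_mul_lt_of_budget_lt (hQ : ∀ z, 0 ≤ Q z) (hQX : ∀ x, 0 < margX Q x)
    (hc : IsChoiceFun Q c) (hε : 0 < ε) (hhard : ε < ∑ z, if z.2 ≠ c z.1 then Q z else 0)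
    {sec : X → Y} (hsec : ∀ x, sec x ≠ c x) {s : X → ℝ} (hs : ∀ x, s x ∈ Set.Icc 0 1)
    (hbudget : ∑ x, (margX Q x - Q (x, c x)) * s x < ε) :
    ∑ x, margX Q x * s x < ∑ x, margX Q x * exclusionProb Q (SPMeasure Q c) ε (x, sec x) := by
  have hB := sum_nonchosen_mul_exclusionProb_SPMeasure hQ hQX hc hε.le hhard hsec
  obtain ⟨θ, hθ, h1, h0⟩ := exists_threshold_exclusionProb_SPMeasure hQ hQX hc hsec (hB ▸ hε)
  have hlg : ∀ x, (1 - θ)⁻¹ * (margX Q x - Q (x, c x))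
      = margX Q x * ((1 - predictability Q x) / (1 - θ)) := fun x => by
    rw [hc.margX_sub (hQX x)]; ring
  refine sum_mul_lt_sum_mul_of_complementary_slackness (inv_pos.2 (sub_pos.2 hθ)) hs
    (fun x hx => h1 x ?_) (fun x hx => h0 x ?_) (hbudget.trans_eq hB.symm)
  · rw [hlg, mul_lt_iff_lt_one_right (hQX x), div_lt_one (sub_pos.2 hθ)] at hx
    linarith
  · rw [hlg, lt_mul_iff_one_lt_right (hQX x), one_lt_div (sub_pos.2 hθ)] at hx
    linarith

theorem probXT_one_lt_card_SPMeasure_lt (hY : 2 ≤ Fintype.card Y) (hQ : ∀ z, 0 ≤ Q z)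
    (hQX : ∀ x, 0 < margX Q x) (hc : IsChoiceFun Q c) (A : X × Y → ℝ) (hε : 0 < ε)
    (hmult : probXT Q (fun x τ => 1 < (predSet Q A ε x τ).card) ≠ 0)
    (hempty : probXT Q (fun x τ => (predSet Q A ε x τ).card = 0) ≠ 0) :
    probXT Q (fun x τ => 1 < (predSet Q (SPMeasure Q c) ε x τ).card)
      < probXT Q (fun x τ => 1 < (predSet Q A ε x τ).card) := by
  obtain ⟨top, sec, hne, htop, hsec⟩ := exists_top_second hY A
  have : Nontrivial Y := Fintype.one_lt_card_iff_nontrivial.1 hY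
  choose sec₀ hsec₀ using fun x => exists_ne (c x)
  rw [probXT_card_eq_zero hQ htop] at hempty
  rw [probXT_one_lt_card hQ hne htop hsec] at hmult ⊢
  rw [probXT_one_lt_card hQ hsec₀ (SPMeasure_le_chosen hc hQX) fun x y hy => by
    rw [SPMeasure_of_ne hy, SPMeasure_of_ne (hsec₀ x)]]
  rcases le_or_gt (∑ z, if z.2 ≠ c z.1 then Q z else 0) ε with heasy | hhard
  · have hB : ∀ x, exclusionProb Q (SPMeasure Q c) ε (x, sec₀ x) = 1 := fun x =>
      exclusionProb_eq_one_of_le hQ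
        ((sum_le_SPMeasure_le_sum_nonchosen hQ hc hQX (hsec₀ x)).trans heasy)
    simp only [hB, sub_self, mul_zero, sum_const_zero]
    exact lt_of_le_of_ne (sum_nonneg fun x _ => mul_nonneg (hQX x).le
      (sub_nonneg.2 (exclusionProb_le_one hQ _))) (Ne.symm hmult)
  · have hδ : 0 < ∑ x, Q (x, c x) * exclusionProb Q A ε (x, top x) := by
      obtain ⟨x, -, hx⟩ := exists_ne_zero_of_sum_ne_zero hempty
      refine sum_pos' (fun x _ => mul_nonneg (hQ _) (exclusionProb_nonneg _)) ⟨x, mem_univ x, ?_⟩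
      exact mul_pos (hc.chosen_pos (hQX x))
        ((exclusionProb_nonneg _).lt_of_ne (right_ne_zero_of_mul hx).symm)
    have hbudget := sum_exclusion_budget_le hQ hε.le htop hsec fun x => hc.le (hQX x)
    rw [sum_add_distrib] at hbudget
    have := sum_margX_mul_lt_of_budget_lt hQ hQX hc hε hhard hsec₀
      (s := fun x => exclusionProb Q A ε (x, sec x))
      (fun x => ⟨exclusionProb_nonneg _, exclusionProb_le_one hQ _⟩) (by linarith)
    simp only [mul_sub, mul_one, sum_sub_distrib]
    linarith

end Optimality

theorem stmt7_general {X Y : Type*} [Fintype X] [Fintype Y] [DecidableEq Y]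
    (hY : 2 ≤ Fintype.card Y) (Q : X × Y → ℝ) (hQ0 : ∀ z, 0 ≤ Q z)
    (hQX : ∀ x, 0 < margX Q x) (A : X × Y → ℝ) (hM : MOpt Q A) :
    ∀ ε ∈ Set.Ioo (0:ℝ) 1,
      probXT Q (fun x τ => 1 < (predSet Q A ε x τ).card) *
        probXT Q (fun x τ => (predSet Q A ε x τ).card = 0) = 0 := by
  intro ε hε
  by_contra h
  obtain ⟨hmult, hempty⟩ := mul_ne_zero_iff.1 h
  have : Nonempty Y := Fintype.card_pos_iff.1 (by omega)
  obtain ⟨c, hc⟩ := exists_isChoiceFun Q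
  have hlt := probXT_one_lt_card_SPMeasure_lt hY hQ0 hQX hc A hε.1 hmult hempty
  rcases hM (SPMeasure Q c) ε hε with hlt' | ⟨heq, -⟩
  · exact lt_asymm hlt hlt'
  · exact hlt.ne' heq

/-- If `A` is M-optimal then at each significance level multiple and empty predictions
cannot both have positive probability. -/
theorem stmt7 {X Y : Type*} [Fintype X] [Fintype Y] [DecidableEq Y] [Nonempty X]
    (hY : 2 ≤ Fintype.card Y) (Q : X × Y → ℝ) (hQ0 : ∀ z, 0 ≤ Q z)
    (hQ1 : ∑ z : X × Y, Q z = 1) (hQX : ∀ x, 0 < margX Q x) (A : X × Y → ℝ) (hM : MOpt Q A) :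
    ∀ ε ∈ Set.Ioo (0:ℝ) 1,
      probXT Q (fun x τ => 1 < (predSet Q A ε x τ).card) *
        probXT Q (fun x τ => (predSet Q A ε x τ).card = 0) = 0 :=
  stmt7_general hY Q hQ0 hQX A hM
end

section
/- For every idealised conformity measure A, every x ∈ X and every τ ∈ [0,1]: Σ_{y∈Y} p_A(x,y,τ) = ∫_0^1 |Γ_A^ε(x,τ)| dε. -/
open Finset MeasureTheory

theorem intervalIntegral_ite_lt_one_zero {a b c : ℝ} (hac : a ≤ c) (hcb : c ≤ b) :
    ∫ ε in a..b, (if ε < c then (1 : ℝ) else 0) = c - a := by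
  have hind : (fun ε : ℝ => if ε < c then (1 : ℝ) else 0) = (Set.Iio c).indicator 1 := by
    ext ε
    simp [Set.indicator_apply]
  have hIoc : Set.Ioc a b ∩ Set.Iio c = Set.Ioo a c :=
    Set.ext fun _ => ⟨fun ⟨⟨ha, _⟩, hc⟩ => ⟨ha, hc⟩, fun ⟨ha, hc⟩ => ⟨⟨ha, hc.le.trans hcb⟩, hc⟩⟩
  rw [hind, intervalIntegral.integral_of_le (hac.trans hcb),
    setIntegral_indicator measurableSet_Iio, hIoc]
  simp [hac]

theorem antitone_ite_lt_one_zero (c : ℝ) :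
    Antitone fun ε : ℝ => if ε < c then (1 : ℝ) else 0 :=
  fun _ _ hab => by dsimp only; split_ifs <;> linarith [hab]

/- A finite layer-cake formula: each `f i ∈ [0, 1]` is the length of `{ε ∈ [0, 1] : ε < f i}`. -/
theorem Finset.sum_eq_intervalIntegral_card_filter_lt {ι : Type*} (s : Finset ι) {f : ι → ℝ}
    (hf0 : ∀ i ∈ s, 0 ≤ f i) (hf1 : ∀ i ∈ s, f i ≤ 1) :
    ∑ i ∈ s, f i = ∫ ε in (0 : ℝ)..1, ((s.filter fun i => ε < f i).card : ℝ) := by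
  simp_rw [Finset.natCast_card_filter]
  rw [intervalIntegral.integral_finsetSum
    fun i _ => (antitone_ite_lt_one_zero (f i)).intervalIntegrable]
  refine Finset.sum_congr rfl fun i hi => ?_
  rw [intervalIntegral_ite_lt_one_zero (hf0 i hi) (hf1 i hi), sub_zero]

section PValue

variable {X Y : Type*} [Fintype X] [Fintype Y] {Q : X × Y → ℝ}

theorem pValue_nonneg (hQ0 : ∀ z, 0 ≤ Q z) (A : X × Y → ℝ) (x : X) (y : Y) {τ : ℝ}
    (hτ : 0 ≤ τ) : 0 ≤ pValue Q A x y τ := by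
  have hsum_nonneg (p : X × Y → Prop) [DecidablePred p] :
      0 ≤ ∑ z : X × Y, if p z then Q z else 0 :=
    Finset.sum_nonneg fun z _ => by split_ifs; exacts [hQ0 z, le_rfl]
  exact add_nonneg (hsum_nonneg _) (mul_nonneg hτ (hsum_nonneg _))

theorem pValue_le_one (hQ0 : ∀ z, 0 ≤ Q z) (hQ1 : ∑ z : X × Y, Q z = 1) (A : X × Y → ℝ)
    (x : X) (y : Y) {τ : ℝ} (hτ : τ ≤ 1) : pValue Q A x y τ ≤ 1 := by
  set a := A (x, y)
  have hties : τ * ∑ z : X × Y, (if A z = a then Q z else 0)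
      ≤ ∑ z : X × Y, if A z = a then Q z else 0 :=
    mul_le_of_le_one_left (Finset.sum_nonneg fun z _ => by split_ifs; exacts [hQ0 z, le_rfl]) hτ
  have hle : (∑ z : X × Y, if A z < a then Q z else 0)
      + (∑ z : X × Y, if A z = a then Q z else 0) ≤ 1 := by
    rw [← Finset.sum_add_distrib, ← hQ1]
    refine Finset.sum_le_sum fun z _ => ?_
    split_ifs with hlt heq
    · exact absurd heq hlt.ne
    all_goals linarith [hQ0 z]
  unfold pValue
  linarith

end PValue

theorem stmt9_general {X Y : Type*} [Fintype X] [Fintype Y]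
    (Q : X × Y → ℝ) (hQ0 : ∀ z, 0 ≤ Q z)
    (hQ1 : ∑ z : X × Y, Q z = 1) (A : X × Y → ℝ) (x : X) (τ : ℝ) (hτ : τ ∈ Set.Icc (0:ℝ) 1) :
    ∑ y, pValue Q A x y τ = ∫ ε in (0:ℝ)..1, ((predSet Q A ε x τ).card : ℝ) :=
  Finset.sum_eq_intervalIntegral_card_filter_lt univ
    (fun y _ => pValue_nonneg hQ0 A x y hτ.1) (fun y _ => pValue_le_one hQ0 hQ1 A x y hτ.2)

/-- `Σ_y p_A(x,y,τ) = ∫_0^1 |Γ_A^ε(x,τ)| dε`. -/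
theorem stmt9 {X Y : Type*} [Fintype X] [Fintype Y] [DecidableEq Y] [Nonempty X]
    (hY : 2 ≤ Fintype.card Y) (Q : X × Y → ℝ) (hQ0 : ∀ z, 0 ≤ Q z)
    (hQ1 : ∑ z : X × Y, Q z = 1) (hQX : ∀ x, 0 < margX Q x) (A : X × Y → ℝ) (x : X) (τ : ℝ) (hτ : τ ∈ Set.Icc (0:ℝ) 1) :
    ∑ y, pValue Q A x y τ = ∫ ε in (0:ℝ)..1, ((predSet Q A ε x τ).card : ℝ) :=
  stmt9_general Q hQ0 hQ1 A x τ hτ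
end

section
/- For every idealised conformity measure A: E_{x,τ}[Σ_{y∈Y} p_A(x,y,τ)] = E_{(x,y),τ}[Σ_{y'≠y} p_A(x,y',τ)] + 1/2. -/
/-- `E_(x,τ)[Σ_y p_A(x,y,τ)] = E_((x,y),τ)[Σ_(y'≠y) p_A(x,y',τ)] + 1/2`. -/
theorem stmt11 {X Y : Type*} [Fintype X] [Fintype Y] [DecidableEq Y] [Nonempty X]
    (hY : 2 ≤ Fintype.card Y) (Q : X × Y → ℝ) (hQ0 : ∀ z, 0 ≤ Q z)
    (hQ1 : ∑ z : X × Y, Q z = 1) (hQX : ∀ x, 0 < margX Q x) (A : X × Y → ℝ) :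
    expXT Q (fun x τ => ∑ y, pValue Q A x y τ)
      = expZT Q (fun z τ => ∑ y' ∈ Finset.univ.erase z.2, pValue Q A z.1 y' τ)
        + 1 / 2 := by
  classical
  -- abbreviations
  set a : X × Y → ℝ := fun z => ∑ w : X × Y, if A w < A z then Q w else 0 with ha
  set b : X × Y → ℝ := fun z => ∑ w : X × Y, if A w = A z then Q w else 0 with hb
  have hint : ∀ (x : X) (y : Y),
      (∫ τ in (0:ℝ)..1, pValue Q A x y τ) = a (x, y) + b (x, y) / 2 := by
    intro x y
    unfold pValue
    rw [intervalIntegral.integral_add intervalIntegrable_const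
      (intervalIntegral.intervalIntegrable_id.mul_const _)]
    simp [intervalIntegral.integral_mul_const, integral_id, ha, hb]
    ring
  have hintsum : ∀ (x : X) (s : Finset Y),
      (∫ τ in (0:ℝ)..1, ∑ y ∈ s, pValue Q A x y τ)
        = ∑ y ∈ s, (a (x, y) + b (x, y) / 2) := by
    intro x s
    rw [intervalIntegral.integral_finset_sum]
    · exact Finset.sum_congr rfl fun y _ => hint x y
    · intro y _
      unfold pValue
      exact intervalIntegrable_const.add
        (intervalIntegral.intervalIntegrable_id.mul_const _)
  -- LHS rewrite
  have hLHS : expXT Q (fun x τ => ∑ y, pValue Q A x y τ)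
      = ∑ z : X × Y, Q z * ∑ y, (a (z.1, y) + b (z.1, y) / 2) := by
    unfold expXT
    rw [Fintype.sum_prod_type]
    refine Finset.sum_congr rfl fun x _ => ?_
    rw [hintsum x Finset.univ]
    unfold margX
    rw [Finset.sum_mul]
  have hRHS : expZT Q (fun z τ => ∑ y' ∈ Finset.univ.erase z.2, pValue Q A z.1 y' τ)
      = ∑ z : X × Y, Q z * ∑ y ∈ Finset.univ.erase z.2, (a (z.1, y) + b (z.1, y) / 2) := by
    unfold expZT
    refine Finset.sum_congr rfl fun z _ => ?_
    rw [hintsum z.1 _]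
  rw [hLHS, hRHS]
  -- split off the y = z.2 term
  have hsplit : ∀ z : X × Y,
      Q z * ∑ y, (a (z.1, y) + b (z.1, y) / 2)
        = Q z * ∑ y ∈ Finset.univ.erase z.2, (a (z.1, y) + b (z.1, y) / 2)
          + Q z * (a z + b z / 2) := by
    intro z
    rw [← Finset.sum_erase_add Finset.univ _ (Finset.mem_univ z.2), mul_add]
  rw [funext hsplit, Finset.sum_add_distrib]
  congr 1
  -- validity: ∑ z, Q z * (a z + b z / 2) = 1 / 2
  have key : ∀ z w : X × Y,
      Q z * ((if A w < A z then Q w else 0) + 1/2 * (if A w = A z then Q w else 0))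
        + Q w * ((if A z < A w then Q z else 0) + 1/2 * (if A z = A w then Q z else 0))
        = Q z * Q w := by
    intro z w
    rcases lt_trichotomy (A w) (A z) with h | h | h
    · simp [h, h.ne, not_lt.mpr h.le, h.ne']
      try ring
    · simp [h, lt_irrefl]
      try ring
    · simp [h, h.ne, h.ne', not_lt.mpr h.le]
      try ring
  have hS : ∀ z : X × Y, Q z * (a z + b z / 2)
      = ∑ w : X × Y, Q z * ((if A w < A z then Q w else 0)
          + 1/2 * (if A w = A z then Q w else 0)) := by
    intro z
    rw [← Finset.mul_sum, Finset.sum_add_distrib, ← Finset.mul_sum]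
    simp only [ha, hb]
    ring
  have hsum2 : (∑ z : X × Y, Q z * (a z + b z / 2))
      + (∑ z : X × Y, Q z * (a z + b z / 2)) = 1 := by
    have e1 : (∑ z : X × Y, Q z * (a z + b z / 2))
        = ∑ z : X × Y, ∑ w : X × Y, Q z * ((if A w < A z then Q w else 0)
            + 1/2 * (if A w = A z then Q w else 0)) :=
      Finset.sum_congr rfl fun z _ => hS z
    have e2 : (∑ z : X × Y, ∑ w : X × Y, Q z * ((if A w < A z then Q w else 0)
            + 1/2 * (if A w = A z then Q w else 0)))
        = ∑ z : X × Y, ∑ w : X × Y, Q w * ((if A z < A w then Q z else 0)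
            + 1/2 * (if A z = A w then Q z else 0)) := Finset.sum_comm
    rw [e1]
    nth_rewrite 2 [e2]
    rw [← Finset.sum_add_distrib]
    rw [show (∑ z : X × Y, ((∑ w : X × Y, Q z * ((if A w < A z then Q w else 0)
            + 1/2 * (if A w = A z then Q w else 0)))
          + ∑ w : X × Y, Q w * ((if A z < A w then Q z else 0)
            + 1/2 * (if A z = A w then Q z else 0)))) = ∑ z : X × Y, Q z from
      Finset.sum_congr rfl fun z _ => by
        rw [← Finset.sum_add_distrib]
        rw [show (∑ w : X × Y, (Q z * ((if A w < A z then Q w else 0)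
              + 1/2 * (if A w = A z then Q w else 0))
            + Q w * ((if A z < A w then Q z else 0)
              + 1/2 * (if A z = A w then Q z else 0)))) = ∑ w : X × Y, Q z * Q w from
          Finset.sum_congr rfl fun w _ => key z w]
        rw [← Finset.mul_sum, hQ1, mul_one]]
    exact hQ1
  linarith
end
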